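/- arXiv:2203.11416 — 2 statements merged into one kernel-verified Lean document; each statement's English description precedes it below -/
import Mathlib

section
/- For n ≥ 1 and k ≥ 0, the number of permutations of length n in Av(231, 312, 1432) with exactly k inversions equals the sum over ℓ from 1 to n of C(n-ℓ-(k-C(ℓ,2)), k-C(ℓ,2)). -/
open Finset MvPolynomial
open scoped Classical

/-- `π` contains the pattern given by the list `p` (one-line notation). -/
def ContainsPat {n : ℕ} (π : Equiv.Perm (Fin n)) (p : List ℕ) : Prop :=
  ∃ f : Fin p.length → Fin n, StrictMono f ∧
    ∀ i j : Fin p.length, p.get i < p.get j ↔ π (f i) < π (f j)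

/-- `π` avoids every pattern in the list `S`. -/
def AvoidsAll {n : ℕ} (π : Equiv.Perm (Fin n)) (S : List (List ℕ)) : Prop :=
  ∀ p ∈ S, ¬ ContainsPat π p

/-- Fibonacci numbers with the convention `F 0 = F 1 = 1`. -/
def fib' : ℕ → ℕ
  | 0 => 1
  | 1 => 1
  | n + 2 => fib' (n + 1) + fib' n

/-- number of inversions -/
def invNum {n : ℕ} (π : Equiv.Perm (Fin n)) : ℕ :=
  (Finset.univ.filter (fun p : Fin n × Fin n => p.1 < p.2 ∧ π p.2 < π p.1)).card

/-- The last `k` entries of `π` contain pattern `p`. -/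
def SegContainsPat {n : ℕ} (π : Equiv.Perm (Fin n)) (k : ℕ) (p : List ℕ) : Prop :=
  ∃ f : Fin p.length → Fin n, StrictMono f ∧ (∀ i, n - k ≤ ((f i : Fin n) : ℕ)) ∧
    ∀ i j : Fin p.length, p.get i < p.get j ↔ π (f i) < π (f j)

/-- The last `k` entries of `π` are the top `k` values and form a Fibonacci permutation. -/
def IsFinalFib {n : ℕ} (π : Equiv.Perm (Fin n)) (k : ℕ) : Prop :=
  k ≤ n ∧ (∀ i : Fin n, n - k ≤ (i : ℕ) → n - k ≤ ((π i : Fin n) : ℕ)) ∧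
    ∀ p ∈ [[2,3,1],[3,1,2],[3,2,1]], ¬ SegContainsPat π k p

/-- `Fib(π)`: length of the longest final segment of `π` consisting of the top values
and avoiding 231, 312, 321. -/
noncomputable def fibStat {n : ℕ} (π : Equiv.Perm (Fin n)) : ℕ := sSup {k | IsFinalFib π k}

/-- direct sum `π ⊕ σ` -/
def dsum {m n : ℕ} (π : Equiv.Perm (Fin m)) (σ : Equiv.Perm (Fin n)) :
    Equiv.Perm (Fin (m + n)) :=
  finSumFinEquiv.symm.trans ((Equiv.sumCongr π σ).trans finSumFinEquiv)

/-- skew sum `π ⊖ σ` -/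
def sskew {m n : ℕ} (π : Equiv.Perm (Fin m)) (σ : Equiv.Perm (Fin n)) :
    Equiv.Perm (Fin (m + n)) :=
  finSumFinEquiv.symm.trans ((Equiv.sumCongr π σ).trans
    ((Equiv.sumComm (Fin m) (Fin n)).trans (finSumFinEquiv.trans (finCongr (Nat.add_comm n m)))))

/-- the pattern 321 as a permutation of `Fin 3` -/
def perm321 : Equiv.Perm (Fin 3) := Fin.revPerm

/-- the pattern 312 as a permutation of `Fin 3` -/
def perm312 : Equiv.Perm (Fin 3) := (finRotate 3)⁻¹

/-- binomial coefficient on ℤ, zero when undefined -/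
def C (a b : ℤ) : ℤ := if 0 ≤ b ∧ b ≤ a then (a.toNat.choose b.toNat : ℤ) else 0

/-- generating function `G_n(v,q)` with `v = X 0`, `q = X 1` -/
noncomputable def G (n : ℕ) (S : List (List ℕ)) : MvPolynomial (Fin 2) ℤ :=
  ∑ π ∈ Finset.univ.filter (fun π : Equiv.Perm (Fin n) => AvoidsAll π S),
    X 0 ^ fibStat π * X 1 ^ invNum π

/-- Fibonacci generating function `F_n(q)` with `q = X 1` -/
noncomputable def Fq (n : ℕ) : MvPolynomial (Fin 2) ℤ :=
  ∑ π ∈ Finset.univ.filter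
      (fun π : Equiv.Perm (Fin n) => AvoidsAll π [[2,3,1],[3,1,2],[3,2,1]]),
    X 1 ^ invNum π


private lemma strictMono3' {α} [Preorder α] {a b c : α} (h1 : a < b) (h2 : b < c) :
    StrictMono ![a,b,c] := by
  intro i j hij
  match i, j with
  | ⟨0,_⟩, ⟨0,_⟩ => exact absurd hij (by norm_num : ¬((0:ℕ) < 0))
  | ⟨0,_⟩, ⟨1,_⟩ => exact h1
  | ⟨0,_⟩, ⟨2,_⟩ => exact h1.trans h2
  | ⟨1,_⟩, ⟨0,_⟩ => exact absurd hij (by norm_num : ¬((1:ℕ) < 0))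
  | ⟨1,_⟩, ⟨1,_⟩ => exact absurd hij (by norm_num : ¬((1:ℕ) < 1))
  | ⟨1,_⟩, ⟨2,_⟩ => exact h2
  | ⟨2,_⟩, ⟨0,_⟩ => exact absurd hij (by norm_num : ¬((2:ℕ) < 0))
  | ⟨2,_⟩, ⟨1,_⟩ => exact absurd hij (by norm_num : ¬((2:ℕ) < 1))
  | ⟨2,_⟩, ⟨2,_⟩ => exact absurd hij (by norm_num : ¬((2:ℕ) < 2))

private lemma strictMono4' {α} [Preorder α] {a b c d : α} (h1 : a < b) (h2 : b < c)
    (h3 : c < d) : StrictMono ![a,b,c,d] := by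
  intro i j hij
  match i, j with
  | ⟨0,_⟩, ⟨0,_⟩ => exact absurd hij (by norm_num : ¬((0:ℕ) < 0))
  | ⟨0,_⟩, ⟨1,_⟩ => exact h1
  | ⟨0,_⟩, ⟨2,_⟩ => exact h1.trans h2
  | ⟨0,_⟩, ⟨3,_⟩ => exact (h1.trans h2).trans h3
  | ⟨1,_⟩, ⟨0,_⟩ => exact absurd hij (by norm_num : ¬((1:ℕ) < 0))
  | ⟨1,_⟩, ⟨1,_⟩ => exact absurd hij (by norm_num : ¬((1:ℕ) < 1))
  | ⟨1,_⟩, ⟨2,_⟩ => exact h2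
  | ⟨1,_⟩, ⟨3,_⟩ => exact h2.trans h3
  | ⟨2,_⟩, ⟨0,_⟩ => exact absurd hij (by norm_num : ¬((2:ℕ) < 0))
  | ⟨2,_⟩, ⟨1,_⟩ => exact absurd hij (by norm_num : ¬((2:ℕ) < 1))
  | ⟨2,_⟩, ⟨2,_⟩ => exact absurd hij (by norm_num : ¬((2:ℕ) < 2))
  | ⟨2,_⟩, ⟨3,_⟩ => exact h3
  | ⟨3,_⟩, ⟨0,_⟩ => exact absurd hij (by norm_num : ¬((3:ℕ) < 0))
  | ⟨3,_⟩, ⟨1,_⟩ => exact absurd hij (by norm_num : ¬((3:ℕ) < 1))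
  | ⟨3,_⟩, ⟨2,_⟩ => exact absurd hij (by norm_num : ¬((3:ℕ) < 2))
  | ⟨3,_⟩, ⟨3,_⟩ => exact absurd hij (by norm_num : ¬((3:ℕ) < 3))

lemma contains_231 {n : ℕ} {π : Equiv.Perm (Fin n)} {a b c : Fin n}
    (hab : a < b) (hbc : b < c) (h1 : π c < π a) (h2 : π a < π b) :
    ContainsPat π [2,3,1] := by
  refine ⟨![a,b,c], strictMono3' hab hbc, ?_⟩
  intro i j
  match i, j with
  | ⟨0,_⟩, ⟨0,_⟩ => exact iff_of_false (by norm_num : ¬((2:ℕ) < 2)) (lt_irrefl _)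
  | ⟨0,_⟩, ⟨1,_⟩ => exact iff_of_true (by norm_num : (2:ℕ) < 3) h2
  | ⟨0,_⟩, ⟨2,_⟩ => exact iff_of_false (by norm_num : ¬((2:ℕ) < 1)) (asymm h1)
  | ⟨1,_⟩, ⟨0,_⟩ => exact iff_of_false (by norm_num : ¬((3:ℕ) < 2)) (asymm h2)
  | ⟨1,_⟩, ⟨1,_⟩ => exact iff_of_false (by norm_num : ¬((3:ℕ) < 3)) (lt_irrefl _)
  | ⟨1,_⟩, ⟨2,_⟩ => exact iff_of_false (by norm_num : ¬((3:ℕ) < 1)) (asymm (h1.trans h2))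
  | ⟨2,_⟩, ⟨0,_⟩ => exact iff_of_true (by norm_num : (1:ℕ) < 2) h1
  | ⟨2,_⟩, ⟨1,_⟩ => exact iff_of_true (by norm_num : (1:ℕ) < 3) (h1.trans h2)
  | ⟨2,_⟩, ⟨2,_⟩ => exact iff_of_false (by norm_num : ¬((1:ℕ) < 1)) (lt_irrefl _)

lemma contains_312 {n : ℕ} {π : Equiv.Perm (Fin n)} {a b c : Fin n}
    (hab : a < b) (hbc : b < c) (h1 : π b < π c) (h2 : π c < π a) :
    ContainsPat π [3,1,2] := by
  refine ⟨![a,b,c], strictMono3' hab hbc, ?_⟩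
  intro i j
  match i, j with
  | ⟨0,_⟩, ⟨0,_⟩ => exact iff_of_false (by norm_num : ¬((3:ℕ) < 3)) (lt_irrefl _)
  | ⟨0,_⟩, ⟨1,_⟩ => exact iff_of_false (by norm_num : ¬((3:ℕ) < 1)) (asymm (h1.trans h2))
  | ⟨0,_⟩, ⟨2,_⟩ => exact iff_of_false (by norm_num : ¬((3:ℕ) < 2)) (asymm h2)
  | ⟨1,_⟩, ⟨0,_⟩ => exact iff_of_true (by norm_num : (1:ℕ) < 3) (h1.trans h2)
  | ⟨1,_⟩, ⟨1,_⟩ => exact iff_of_false (by norm_num : ¬((1:ℕ) < 1)) (lt_irrefl _)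
  | ⟨1,_⟩, ⟨2,_⟩ => exact iff_of_true (by norm_num : (1:ℕ) < 2) h1
  | ⟨2,_⟩, ⟨0,_⟩ => exact iff_of_true (by norm_num : (2:ℕ) < 3) h2
  | ⟨2,_⟩, ⟨1,_⟩ => exact iff_of_false (by norm_num : ¬((2:ℕ) < 1)) (asymm h1)
  | ⟨2,_⟩, ⟨2,_⟩ => exact iff_of_false (by norm_num : ¬((2:ℕ) < 2)) (lt_irrefl _)

lemma contains_1432 {n : ℕ} {π : Equiv.Perm (Fin n)} {a b c d : Fin n}
    (hab : a < b) (hbc : b < c) (hcd : c < d)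
    (h1 : π a < π d) (h2 : π d < π c) (h3 : π c < π b) :
    ContainsPat π [1,4,3,2] := by
  refine ⟨![a,b,c,d], strictMono4' hab hbc hcd, ?_⟩
  intro i j
  match i, j with
  | ⟨0,_⟩, ⟨0,_⟩ => exact iff_of_false (by norm_num : ¬((1:ℕ) < 1)) (lt_irrefl _)
  | ⟨0,_⟩, ⟨1,_⟩ => exact iff_of_true (by norm_num : (1:ℕ) < 4) (h1.trans (h2.trans h3))
  | ⟨0,_⟩, ⟨2,_⟩ => exact iff_of_true (by norm_num : (1:ℕ) < 3) (h1.trans h2)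
  | ⟨0,_⟩, ⟨3,_⟩ => exact iff_of_true (by norm_num : (1:ℕ) < 2) h1
  | ⟨1,_⟩, ⟨0,_⟩ => exact iff_of_false (by norm_num : ¬((4:ℕ) < 1)) (asymm (h1.trans (h2.trans h3)))
  | ⟨1,_⟩, ⟨1,_⟩ => exact iff_of_false (by norm_num : ¬((4:ℕ) < 4)) (lt_irrefl _)
  | ⟨1,_⟩, ⟨2,_⟩ => exact iff_of_false (by norm_num : ¬((4:ℕ) < 3)) (asymm h3)
  | ⟨1,_⟩, ⟨3,_⟩ => exact iff_of_false (by norm_num : ¬((4:ℕ) < 2)) (asymm (h2.trans h3))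
  | ⟨2,_⟩, ⟨0,_⟩ => exact iff_of_false (by norm_num : ¬((3:ℕ) < 1)) (asymm (h1.trans h2))
  | ⟨2,_⟩, ⟨1,_⟩ => exact iff_of_true (by norm_num : (3:ℕ) < 4) h3
  | ⟨2,_⟩, ⟨2,_⟩ => exact iff_of_false (by norm_num : ¬((3:ℕ) < 3)) (lt_irrefl _)
  | ⟨2,_⟩, ⟨3,_⟩ => exact iff_of_false (by norm_num : ¬((3:ℕ) < 2)) (asymm h2)
  | ⟨3,_⟩, ⟨0,_⟩ => exact iff_of_false (by norm_num : ¬((2:ℕ) < 1)) (asymm h1)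
  | ⟨3,_⟩, ⟨1,_⟩ => exact iff_of_true (by norm_num : (2:ℕ) < 4) (h2.trans h3)
  | ⟨3,_⟩, ⟨2,_⟩ => exact iff_of_true (by norm_num : (2:ℕ) < 3) h2
  | ⟨3,_⟩, ⟨3,_⟩ => exact iff_of_false (by norm_num : ¬((2:ℕ) < 2)) (lt_irrefl _)

lemma ex_231 {n : ℕ} {π : Equiv.Perm (Fin n)} (h : ContainsPat π [2,3,1]) :
    ∃ a b c : Fin n, a < b ∧ b < c ∧ π c < π a ∧ π a < π b := by
  obtain ⟨f, hm, hiff⟩ := h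
  exact ⟨f ⟨0, by norm_num⟩, f ⟨1, by norm_num⟩, f ⟨2, by norm_num⟩,
    hm (show ((⟨0, by norm_num⟩ : Fin 3)) < ⟨1, by norm_num⟩ from (by norm_num : (0:ℕ) < 1)),
    hm (show ((⟨1, by norm_num⟩ : Fin 3)) < ⟨2, by norm_num⟩ from (by norm_num : (1:ℕ) < 2)),
    (hiff ⟨2, by norm_num⟩ ⟨0, by norm_num⟩).mp (by norm_num : (1:ℕ) < 2),
    (hiff ⟨0, by norm_num⟩ ⟨1, by norm_num⟩).mp (by norm_num : (2:ℕ) < 3)⟩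

lemma ex_312 {n : ℕ} {π : Equiv.Perm (Fin n)} (h : ContainsPat π [3,1,2]) :
    ∃ a b c : Fin n, a < b ∧ b < c ∧ π b < π c ∧ π c < π a := by
  obtain ⟨f, hm, hiff⟩ := h
  exact ⟨f ⟨0, by norm_num⟩, f ⟨1, by norm_num⟩, f ⟨2, by norm_num⟩,
    hm (show ((⟨0, by norm_num⟩ : Fin 3)) < ⟨1, by norm_num⟩ from (by norm_num : (0:ℕ) < 1)),
    hm (show ((⟨1, by norm_num⟩ : Fin 3)) < ⟨2, by norm_num⟩ from (by norm_num : (1:ℕ) < 2)),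
    (hiff ⟨1, by norm_num⟩ ⟨2, by norm_num⟩).mp (by norm_num : (1:ℕ) < 2),
    (hiff ⟨2, by norm_num⟩ ⟨0, by norm_num⟩).mp (by norm_num : (2:ℕ) < 3)⟩

lemma ex_1432 {n : ℕ} {π : Equiv.Perm (Fin n)} (h : ContainsPat π [1,4,3,2]) :
    ∃ a b c d : Fin n, a < b ∧ b < c ∧ c < d ∧ π a < π d ∧ π d < π c ∧ π c < π b := by
  obtain ⟨f, hm, hiff⟩ := h
  exact ⟨f ⟨0, by norm_num⟩, f ⟨1, by norm_num⟩, f ⟨2, by norm_num⟩, f ⟨3, by norm_num⟩,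
    hm (show ((⟨0, by norm_num⟩ : Fin 4)) < ⟨1, by norm_num⟩ from (by norm_num : (0:ℕ) < 1)),
    hm (show ((⟨1, by norm_num⟩ : Fin 4)) < ⟨2, by norm_num⟩ from (by norm_num : (1:ℕ) < 2)),
    hm (show ((⟨2, by norm_num⟩ : Fin 4)) < ⟨3, by norm_num⟩ from (by norm_num : (2:ℕ) < 3)),
    (hiff ⟨0, by norm_num⟩ ⟨3, by norm_num⟩).mp (by norm_num : (1:ℕ) < 2),
    (hiff ⟨3, by norm_num⟩ ⟨2, by norm_num⟩).mp (by norm_num : (2:ℕ) < 3),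
    (hiff ⟨2, by norm_num⟩ ⟨1, by norm_num⟩).mp (by norm_num : (3:ℕ) < 4)⟩


def Nice {n : ℕ} (π : Equiv.Perm (Fin n)) : Prop :=
  (∀ i j : Fin n, i < j → π j < π i → (π i : ℕ) + (i : ℕ) = (π j : ℕ) + (j : ℕ)) ∧
  (∀ t i j : Fin n, t < i → i < j → (i : ℕ) + 2 ≤ (j : ℕ) → π j < π i → π j ≤ π t)

lemma layered_of_avoids {n : ℕ} {π : Equiv.Perm (Fin n)}
    (h231 : ¬ ContainsPat π [2,3,1]) (h312 : ¬ ContainsPat π [3,1,2]) :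
    ∀ i j : Fin n, i < j → π j < π i → (π i : ℕ) + (i : ℕ) = (π j : ℕ) + (j : ℕ) := by
  intro i j hij hji
  have himg : (Finset.Ioo i j).image π = Finset.Ioo (π j) (π i) := by
    ext v
    simp only [Finset.mem_image, Finset.mem_Ioo]
    constructor
    · rintro ⟨t, ⟨hit, htj⟩, rfl⟩
      constructor
      · rcases lt_trichotomy (π t) (π j) with h | h | h
        · exact absurd (contains_312 hit htj h hji) h312
        · exact absurd (π.injective h) (by intro he; rw [he] at htj; exact lt_irrefl _ htj)
        · exact h
      · rcases lt_trichotomy (π t) (π i) with h | h | h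
        · exact h
        · exact absurd (π.injective h) (by intro he; rw [he] at hit; exact lt_irrefl _ hit)
        · exact absurd (contains_231 hit htj hji h) h231
    · rintro ⟨hv1, hv2⟩
      refine ⟨π.symm v, ⟨?_, ?_⟩, π.apply_symm_apply v⟩
      · rcases lt_trichotomy (π.symm v) i with h | h | h
        · have hv : π (π.symm v) = v := π.apply_symm_apply v
          exact absurd (contains_231 h hij (by rwa [hv]) (by rwa [hv])) h231
        · exfalso
          have : v = π i := by rw [← h, π.apply_symm_apply]
          rw [this] at hv2; exact lt_irrefl _ hv2
        · exact h
      · rcases lt_trichotomy (π.symm v) j with h | h | h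
        · exact h
        · exfalso
          have : v = π j := by rw [← h, π.apply_symm_apply]
          rw [this] at hv1; exact lt_irrefl _ hv1
        · have hv : π (π.symm v) = v := π.apply_symm_apply v
          exact absurd (contains_312 hij h (by rwa [hv]) (by rwa [hv])) h312
  have hcard := congrArg Finset.card himg
  rw [Finset.card_image_of_injective _ π.injective, Fin.card_Ioo, Fin.card_Ioo] at hcard
  have h1 : (i : ℕ) < j := hij
  have h2 : (π j : ℕ) < π i := hji
  omega

lemma avoids_iff_nice {n : ℕ} (π : Equiv.Perm (Fin n)) :
    AvoidsAll π [[2,3,1],[3,1,2],[1,4,3,2]] ↔ Nice π := by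
  constructor
  · intro hav
    have h231 : ¬ ContainsPat π [2,3,1] := hav _ (by simp)
    have h312 : ¬ ContainsPat π [3,1,2] := hav _ (by simp)
    have h1432 : ¬ ContainsPat π [1,4,3,2] := hav _ (by simp)
    have hA := layered_of_avoids h231 h312
    refine ⟨hA, ?_⟩
    intro t i j hti hij hij2 hji
    by_contra hcon
    have hts : (π t : ℕ) < π j := lt_of_not_ge hcon
    have hjn : (j : ℕ) < n := j.isLt
    have hAij := hA i j hij hji
    have hjival : (π j : ℕ) < π i := hji
    have hijval : (i : ℕ) < j := hij
    let u : Fin n := ⟨(i : ℕ) + 1, by omega⟩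
    let w : Fin n := ⟨(i : ℕ) + 2, by omega⟩
    have huv : (u : ℕ) = (i : ℕ) + 1 := rfl
    have hwv : (w : ℕ) = (i : ℕ) + 2 := rfl
    have hiu : i < u := Fin.lt_def.mpr (by omega)
    have huw : u < w := Fin.lt_def.mpr (by omega)
    -- π u < π i
    have hui : π u < π i := by
      rcases lt_trichotomy (π u) (π i) with h | h | h
      · exact h
      · have := π.injective h
        apply_fun (fun x => (x : ℕ)) at this
        omega
      · exfalso
        have huj : (u : ℕ) ≤ j := by omega
        rcases eq_or_lt_of_le huj with he | hlt
        · have : u = j := Fin.ext he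
          rw [this] at h
          have : (π i : ℕ) < π j := h
          omega
        · have e2 := hA u j (Fin.lt_def.mpr hlt) (hji.trans h)
          have : (π i : ℕ) < π u := h
          omega
    have huival := hA i u hiu hui
    -- π w < π u
    have hwu : π w < π u := by
      rcases lt_trichotomy (π w) (π u) with h | h | h
      · exact h
      · have := π.injective h
        apply_fun (fun x => (x : ℕ)) at this
        omega
      · exfalso
        have hval : (π u : ℕ) < π w := h
        have hwj : (w : ℕ) ≤ j := by omega
        rcases eq_or_lt_of_le hwj with he | hlt
        · have : w = j := Fin.ext he
          rw [this] at hval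
          omega
        · have hjw : π j < π w := Fin.lt_def.mpr (by omega)
          have e2 := hA w j (Fin.lt_def.mpr hlt) hjw
          omega
    have hwival := hA u w huw hwu
    -- π j ≤ π w
    have hjw : (π j : ℕ) ≤ π w := by
      rcases lt_trichotomy (π w) (π j) with h | h | h
      · exfalso
        have hiw : i < w := Fin.lt_def.mpr (by omega)
        have e2 := hA i w hiw (h.trans hji)
        have : (π w : ℕ) < π j := h
        omega
      · exact le_of_eq (congrArg (fun x : Fin n => (x : ℕ)) h).symm
      · exact le_of_lt h
    have htw : π t < π w := Fin.lt_def.mpr (by omega)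
    exact absurd (contains_1432 hti hiu huw htw hwu hui) h1432
  · rintro ⟨hA, hB⟩
    intro p hp hcont
    simp only [List.mem_cons, List.not_mem_nil, or_false] at hp
    rcases hp with rfl | rfl | rfl
    · obtain ⟨a, b, c, hab, hbc, h1, h2⟩ := ex_231 hcont
      have e1 := hA a c (hab.trans hbc) h1
      have e2 := hA b c hbc (h1.trans h2)
      have : (a:ℕ) < b := hab
      have : (π a : ℕ) < π b := h2
      omega
    · obtain ⟨a, b, c, hab, hbc, h1, h2⟩ := ex_312 hcont
      have e1 := hA a b hab (h1.trans h2)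
      have e2 := hA a c (hab.trans hbc) h2
      have : (b:ℕ) < c := hbc
      have : (π b : ℕ) < π c := h1
      omega
    · obtain ⟨a, b, c, d, hab, hbc, hcd, h1, h2, h3⟩ := ex_1432 hcont
      have hbd2 : (b:ℕ) + 2 ≤ d := by
        have : (b:ℕ) < c := hbc
        have : (c:ℕ) < d := hcd
        omega
      have := hB a b d hab (hbc.trans hcd) hbd2 (h2.trans h3)
      have h' : (π d : ℕ) ≤ π a := this
      have : (π a : ℕ) < π d := h1
      omega


lemma dsum_castAdd {m n : ℕ} (π : Equiv.Perm (Fin m)) (σ : Equiv.Perm (Fin n)) (i : Fin m) :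
    dsum π σ (Fin.castAdd n i) = Fin.castAdd n (π i) := by
  simp [dsum, Equiv.trans_apply]

lemma dsum_natAdd {m n : ℕ} (π : Equiv.Perm (Fin m)) (σ : Equiv.Perm (Fin n)) (j : Fin n) :
    dsum π σ (Fin.natAdd m j) = Fin.natAdd m (σ j) := by
  simp [dsum, Equiv.trans_apply]

def e1 {n : ℕ} (σ : Equiv.Perm (Fin n)) : Equiv.Perm (Fin (n+1)) := dsum σ 1

def e2 {n : ℕ} (σ : Equiv.Perm (Fin n)) : Equiv.Perm (Fin (n+2)) :=
  dsum σ (Equiv.swap 0 1)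

lemma e1_app {n : ℕ} (σ : Equiv.Perm (Fin n)) (i : Fin n) :
    (e1 σ) (Fin.castAdd 1 i) = Fin.castAdd 1 (σ i) := by
  simp [e1, dsum_castAdd]

lemma e2_app {n : ℕ} (σ : Equiv.Perm (Fin n)) (i : Fin n) :
    (e2 σ) (Fin.castAdd 2 i) = Fin.castAdd 2 (σ i) := by
  simp [e2, dsum_castAdd]

lemma e1_val_lt {n : ℕ} (σ : Equiv.Perm (Fin n)) (i : Fin (n+1)) (h : (i:ℕ) < n) :
    ((e1 σ) i : ℕ) = σ ⟨i, h⟩ := by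
  have h1 : i = Fin.castAdd 1 (⟨i, h⟩ : Fin n) := Fin.ext rfl
  have h2 := congrArg (fun x => (((e1 σ) x) : ℕ)) h1
  rw [h2, e1_app]
  rfl

lemma e1_val_last {n : ℕ} (σ : Equiv.Perm (Fin n)) (i : Fin (n+1)) (h : ¬ (i:ℕ) < n) :
    ((e1 σ) i : ℕ) = n := by
  have hv : (i : ℕ) = n := by have := i.isLt; omega
  have : i = Fin.natAdd n (0 : Fin 1) := Fin.ext (by simpa using hv)
  rw [this]
  show ((dsum σ 1 (Fin.natAdd n 0)) : ℕ) = n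
  rw [dsum_natAdd]
  rfl

lemma e2_val_lt {n : ℕ} (σ : Equiv.Perm (Fin n)) (i : Fin (n+2)) (h : (i:ℕ) < n) :
    ((e2 σ) i : ℕ) = σ ⟨i, h⟩ := by
  have h1 : i = Fin.castAdd 2 (⟨i, h⟩ : Fin n) := Fin.ext rfl
  have h2 := congrArg (fun x => (((e2 σ) x) : ℕ)) h1
  rw [h2, e2_app]
  rfl

lemma e2_val_n {n : ℕ} (σ : Equiv.Perm (Fin n)) (i : Fin (n+2)) (h : (i:ℕ) = n) :
    ((e2 σ) i : ℕ) = n + 1 := by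
  have : i = Fin.natAdd n (0 : Fin 2) := Fin.ext (by simpa using h)
  rw [this]
  show ((dsum σ (Equiv.swap 0 1) (Fin.natAdd n 0)) : ℕ) = n + 1
  rw [dsum_natAdd]
  have : (Equiv.swap (0 : Fin 2) 1) 0 = 1 := Equiv.swap_apply_left 0 1
  rw [this]
  rfl

lemma e2_val_n1 {n : ℕ} (σ : Equiv.Perm (Fin n)) (i : Fin (n+2)) (h : (i:ℕ) = n + 1) :
    ((e2 σ) i : ℕ) = n := by
  have : i = Fin.natAdd n (1 : Fin 2) := Fin.ext (by simpa using h)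
  rw [this]
  show ((dsum σ (Equiv.swap 0 1) (Fin.natAdd n 1)) : ℕ) = n
  rw [dsum_natAdd]
  have : (Equiv.swap (0 : Fin 2) 1) 1 = 0 := Equiv.swap_apply_right 0 1
  rw [this]
  rfl

lemma nice_e1 {n : ℕ} (σ : Equiv.Perm (Fin n)) : Nice (e1 σ) ↔ Nice σ := by
  constructor
  · rintro ⟨A, B⟩
    constructor
    · intro i j hij hji
      have hlt : Fin.castAdd 1 i < Fin.castAdd 1 j := Fin.lt_def.mpr (Fin.lt_def.mp hij)
      have hval : (e1 σ) (Fin.castAdd 1 j) < (e1 σ) (Fin.castAdd 1 i) := by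
        rw [e1_app, e1_app]; exact Fin.lt_def.mpr (Fin.lt_def.mp hji)
      have h := A _ _ hlt hval
      rw [e1_app, e1_app] at h
      exact h
    · intro t i j hti hij h2 hji
      have hval : (e1 σ) (Fin.castAdd 1 j) < (e1 σ) (Fin.castAdd 1 i) := by
        rw [e1_app, e1_app]; exact Fin.lt_def.mpr (Fin.lt_def.mp hji)
      have h := B (Fin.castAdd 1 t) (Fin.castAdd 1 i) (Fin.castAdd 1 j)
        (Fin.lt_def.mpr (Fin.lt_def.mp hti)) (Fin.lt_def.mpr (Fin.lt_def.mp hij)) h2 hval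
      rw [e1_app, e1_app] at h
      exact Fin.le_def.mpr (Fin.le_def.mp h)
  · rintro ⟨A, B⟩
    constructor
    · intro I J hIJ hJI
      by_cases hJ : (J:ℕ) < n
      · have hI : (I:ℕ) < n := lt_trans (Fin.lt_def.mp hIJ) hJ
        have hji : σ ⟨J, hJ⟩ < σ ⟨I, hI⟩ := by
          have h := Fin.lt_def.mp hJI
          rw [e1_val_lt σ J hJ, e1_val_lt σ I hI] at h
          exact Fin.lt_def.mpr h
        have h := A ⟨I, hI⟩ ⟨J, hJ⟩ (Fin.lt_def.mpr (Fin.lt_def.mp hIJ)) hji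
        rw [e1_val_lt σ I hI, e1_val_lt σ J hJ]
        exact h
      · exfalso
        have h1 := e1_val_last σ J hJ
        have h2 := ((e1 σ) I).isLt
        have h3 := Fin.lt_def.mp hJI
        omega
    · intro T I J hTI hIJ h2 hJI
      by_cases hJ : (J:ℕ) < n
      · have hI : (I:ℕ) < n := lt_trans (Fin.lt_def.mp hIJ) hJ
        have hT : (T:ℕ) < n := lt_trans (Fin.lt_def.mp hTI) hI
        have hji : σ ⟨J, hJ⟩ < σ ⟨I, hI⟩ := by
          have h := Fin.lt_def.mp hJI
          rw [e1_val_lt σ J hJ, e1_val_lt σ I hI] at h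
          exact Fin.lt_def.mpr h
        have h := B ⟨T,hT⟩ ⟨I,hI⟩ ⟨J,hJ⟩ (Fin.lt_def.mpr (Fin.lt_def.mp hTI))
          (Fin.lt_def.mpr (Fin.lt_def.mp hIJ)) h2 hji
        rw [Fin.le_def, e1_val_lt σ J hJ, e1_val_lt σ T hT]
        exact Fin.le_def.mp h
      · exfalso
        have h1 := e1_val_last σ J hJ
        have h2' := ((e1 σ) I).isLt
        have h3 := Fin.lt_def.mp hJI
        omega

lemma nice_e2 {n : ℕ} (σ : Equiv.Perm (Fin n)) : Nice (e2 σ) ↔ Nice σ := by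
  constructor
  · rintro ⟨A, B⟩
    constructor
    · intro i j hij hji
      have hval : (e2 σ) (Fin.castAdd 2 j) < (e2 σ) (Fin.castAdd 2 i) := by
        rw [e2_app, e2_app]; exact Fin.lt_def.mpr (Fin.lt_def.mp hji)
      have h := A _ _ (Fin.lt_def.mpr (Fin.lt_def.mp hij) :
        Fin.castAdd 2 i < Fin.castAdd 2 j) hval
      rw [e2_app, e2_app] at h
      exact h
    · intro t i j hti hij h2 hji
      have hval : (e2 σ) (Fin.castAdd 2 j) < (e2 σ) (Fin.castAdd 2 i) := by
        rw [e2_app, e2_app]; exact Fin.lt_def.mpr (Fin.lt_def.mp hji)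
      have h := B (Fin.castAdd 2 t) (Fin.castAdd 2 i) (Fin.castAdd 2 j)
        (Fin.lt_def.mpr (Fin.lt_def.mp hti)) (Fin.lt_def.mpr (Fin.lt_def.mp hij)) h2 hval
      rw [e2_app, e2_app] at h
      exact Fin.le_def.mpr (Fin.le_def.mp h)
  · rintro ⟨A, B⟩
    constructor
    · intro I J hIJ hJI
      have hJb := J.isLt
      by_cases hJ : (J:ℕ) < n
      · have hI : (I:ℕ) < n := lt_trans (Fin.lt_def.mp hIJ) hJ
        have hji : σ ⟨J, hJ⟩ < σ ⟨I, hI⟩ := by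
          have h := Fin.lt_def.mp hJI
          rw [e2_val_lt σ J hJ, e2_val_lt σ I hI] at h
          exact Fin.lt_def.mpr h
        have h := A ⟨I, hI⟩ ⟨J, hJ⟩ (Fin.lt_def.mpr (Fin.lt_def.mp hIJ)) hji
        rw [e2_val_lt σ I hI, e2_val_lt σ J hJ]
        exact h
      · by_cases hJn : (J:ℕ) = n
        · exfalso
          have h1 := e2_val_n σ J hJn
          have h2 := ((e2 σ) I).isLt
          have h3 := Fin.lt_def.mp hJI
          omega
        · have hJ1 : (J:ℕ) = n + 1 := by omega
          have hvJ := e2_val_n1 σ J hJ1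
          have h3 := Fin.lt_def.mp hJI
          -- I must have value n
          have hIb := I.isLt
          have hIn : (I:ℕ) = n := by
            by_contra hc
            rcases lt_trichotomy ((I:ℕ)) n with h | h | h
            · have := e2_val_lt σ I h
              have := (σ ⟨I, h⟩).isLt
              omega
            · exact hc h
            · have hIJv := Fin.lt_def.mp hIJ
              omega
          rw [e2_val_n σ I hIn, hvJ, hIn, hJ1]
          omega
    · intro T I J hTI hIJ h2 hJI
      have hJb := J.isLt
      by_cases hJ : (J:ℕ) < n
      · have hI : (I:ℕ) < n := lt_trans (Fin.lt_def.mp hIJ) hJ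
        have hT : (T:ℕ) < n := lt_trans (Fin.lt_def.mp hTI) hI
        have hji : σ ⟨J, hJ⟩ < σ ⟨I, hI⟩ := by
          have h := Fin.lt_def.mp hJI
          rw [e2_val_lt σ J hJ, e2_val_lt σ I hI] at h
          exact Fin.lt_def.mpr h
        have h := B ⟨T,hT⟩ ⟨I,hI⟩ ⟨J,hJ⟩ (Fin.lt_def.mpr (Fin.lt_def.mp hTI))
          (Fin.lt_def.mpr (Fin.lt_def.mp hIJ)) h2 hji
        rw [Fin.le_def, e2_val_lt σ J hJ, e2_val_lt σ T hT]
        exact Fin.le_def.mp h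
      · by_cases hJn : (J:ℕ) = n
        · exfalso
          have h1 := e2_val_n σ J hJn
          have hb := ((e2 σ) I).isLt
          have h3 := Fin.lt_def.mp hJI
          omega
        · exfalso
          have hJ1 : (J:ℕ) = n + 1 := by omega
          have hvJ := e2_val_n1 σ J hJ1
          have h3 := Fin.lt_def.mp hJI
          have hI : (I:ℕ) < n := by omega
          have := e2_val_lt σ I hI
          have := (σ ⟨I, hI⟩).isLt
          omega

lemma invNum_e1 {n : ℕ} (σ : Equiv.Perm (Fin n)) : invNum (e1 σ) = invNum σ := by
  unfold invNum
  symm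
  apply Finset.card_bij (fun p (_ : p ∈ Finset.univ.filter
    (fun p : Fin n × Fin n => p.1 < p.2 ∧ σ p.2 < σ p.1)) =>
    (Fin.castAdd 1 p.1, Fin.castAdd 1 p.2))
  · intro p hp
    simp only [Finset.mem_filter, Finset.mem_univ, true_and] at hp ⊢
    obtain ⟨h1, h2⟩ := hp
    refine ⟨Fin.lt_def.mpr (Fin.lt_def.mp h1), ?_⟩
    rw [e1_app, e1_app]
    exact Fin.lt_def.mpr (Fin.lt_def.mp h2)
  · intro p hp q hq he
    have h1 := congrArg (fun x : Fin (n+1) × Fin (n+1) => (x.1 : ℕ)) he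
    have h2 := congrArg (fun x : Fin (n+1) × Fin (n+1) => (x.2 : ℕ)) he
    simp only at h1 h2
    exact Prod.ext (Fin.ext h1) (Fin.ext h2)
  · intro b hb
    simp only [Finset.mem_filter, Finset.mem_univ, true_and] at hb
    obtain ⟨h1, h2⟩ := hb
    have hb2 : (b.2 : ℕ) < n := by
      by_contra hc
      have hv := e1_val_last σ b.2 hc
      have hlt := ((e1 σ) b.1).isLt
      have h3 := Fin.lt_def.mp h2
      omega
    have hb1 : (b.1 : ℕ) < n := lt_trans (Fin.lt_def.mp h1) hb2
    refine ⟨(⟨b.1, hb1⟩, ⟨b.2, hb2⟩), ?_, ?_⟩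
    · simp only [Finset.mem_filter, Finset.mem_univ, true_and]
      refine ⟨Fin.lt_def.mpr (Fin.lt_def.mp h1), ?_⟩
      have hv1 := e1_val_lt σ b.1 hb1
      have hv2 := e1_val_lt σ b.2 hb2
      have h3 := Fin.lt_def.mp h2
      exact Fin.lt_def.mpr (by rw [hv1, hv2] at h3; exact h3)
    · exact Prod.ext (Fin.ext rfl) (Fin.ext rfl)

lemma invNum_e2 {n : ℕ} (σ : Equiv.Perm (Fin n)) : invNum (e2 σ) = invNum σ + 1 := by
  unfold invNum
  have hpair : ((⟨n, by omega⟩ : Fin (n+2)), (⟨n+1, by omega⟩ : Fin (n+2))) ∈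
      Finset.univ.filter (fun p : Fin (n+2) × Fin (n+2) => p.1 < p.2 ∧ (e2 σ) p.2 < (e2 σ) p.1) := by
    simp only [Finset.mem_filter, Finset.mem_univ, true_and]
    refine ⟨Fin.lt_def.mpr (Nat.lt_succ_self n), ?_⟩
    apply Fin.lt_def.mpr
    rw [e2_val_n1 σ _ rfl, e2_val_n σ _ rfl]
    omega
  rw [← Finset.card_erase_add_one hpair]
  congr 1
  symm
  apply Finset.card_bij (fun p (_ : p ∈ Finset.univ.filter
    (fun p : Fin n × Fin n => p.1 < p.2 ∧ σ p.2 < σ p.1)) =>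
    (Fin.castAdd 2 p.1, Fin.castAdd 2 p.2))
  · intro p hp
    simp only [Finset.mem_filter, Finset.mem_univ, true_and] at hp
    obtain ⟨h1, h2⟩ := hp
    rw [Finset.mem_erase]
    constructor
    · intro hc
      have hcv := congrArg (fun x : Fin (n+2) × Fin (n+2) => (x.1 : ℕ)) hc
      simp only [Fin.coe_castAdd, Fin.val_mk] at hcv
      have := p.1.isLt
      omega
    · simp only [Finset.mem_filter, Finset.mem_univ, true_and]
      refine ⟨Fin.lt_def.mpr (by simpa [Fin.coe_castAdd] using Fin.lt_def.mp h1), ?_⟩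
      rw [e2_app, e2_app]
      exact Fin.lt_def.mpr (by simpa [Fin.coe_castAdd] using Fin.lt_def.mp h2)
  · intro p hp q hq he
    have h1 := congrArg (fun x : Fin (n+2) × Fin (n+2) => (x.1 : ℕ)) he
    have h2 := congrArg (fun x : Fin (n+2) × Fin (n+2) => (x.2 : ℕ)) he
    simp only at h1 h2
    exact Prod.ext (Fin.ext h1) (Fin.ext h2)
  · intro b hb
    rw [Finset.mem_erase] at hb
    obtain ⟨hne, hb⟩ := hb
    simp only [Finset.mem_filter, Finset.mem_univ, true_and] at hb
    obtain ⟨h1, h2⟩ := hb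
    have hb2b := b.2.isLt
    have hb1b := b.1.isLt
    have h1v := Fin.lt_def.mp h1
    have h2v := Fin.lt_def.mp h2
    have hb2 : (b.2 : ℕ) < n := by
      rcases lt_trichotomy ((b.2 : ℕ)) n with h | h | h
      · exact h
      · exfalso
        have hv := e2_val_n σ b.2 h
        have := ((e2 σ) b.1).isLt
        omega
      · exfalso
        have hJ1 : (b.2 : ℕ) = n + 1 := by omega
        have hv := e2_val_n1 σ b.2 hJ1
        have hb1n : (b.1 : ℕ) = n := by
          rcases lt_trichotomy ((b.1 : ℕ)) n with h' | h' | h'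
          · exfalso
            have := e2_val_lt σ b.1 h'
            have := (σ ⟨b.1, h'⟩).isLt
            omega
          · exact h'
          · omega
        exact hne (Prod.ext (Fin.ext hb1n) (Fin.ext hJ1))
    have hb1 : (b.1 : ℕ) < n := by omega
    refine ⟨(⟨b.1, hb1⟩, ⟨b.2, hb2⟩), ?_, ?_⟩
    · simp only [Finset.mem_filter, Finset.mem_univ, true_and]
      refine ⟨Fin.lt_def.mpr h1v, ?_⟩
      have hv1 := e2_val_lt σ b.1 hb1
      have hv2 := e2_val_lt σ b.2 hb2
      exact Fin.lt_def.mpr (by rw [hv1, hv2] at h2v; exact h2v)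
    · exact Prod.ext (Fin.ext rfl) (Fin.ext rfl)

lemma e1_surj {n : ℕ} (π : Equiv.Perm (Fin (n+1))) (h : (π ⟨n, Nat.lt_succ_self n⟩ : ℕ) = n) :
    ∃ σ : Equiv.Perm (Fin n), e1 σ = π := by
  have hval : ∀ i : Fin n, (π (Fin.castAdd 1 i) : ℕ) < n := by
    intro i
    have hb := (π (Fin.castAdd 1 i)).isLt
    rcases lt_or_eq_of_le (Nat.lt_succ_iff.mp hb) with hlt | heq
    · exact hlt
    · exfalso
      have : π (Fin.castAdd 1 i) = π ⟨n, Nat.lt_succ_self n⟩ := Fin.ext (by rw [heq, h])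
      have := π.injective this
      have := congrArg (fun x : Fin (n+1) => (x : ℕ)) this
      simp only [Fin.coe_castAdd, Fin.val_mk] at this
      exact absurd this (Nat.ne_of_lt i.isLt)
  let f : Fin n → Fin n := fun i => ⟨π (Fin.castAdd 1 i), hval i⟩
  have hinj : Function.Injective f := by
    intro a b hab
    have h1 := congrArg (fun x : Fin n => (x : ℕ)) hab
    simp only [f] at h1
    have h2 : π (Fin.castAdd 1 a) = π (Fin.castAdd 1 b) := Fin.ext h1
    have h3 := π.injective h2
    exact Fin.ext (by simpa [Fin.coe_castAdd] using congrArg (fun x : Fin (n+1) => (x : ℕ)) h3)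
  refine ⟨Equiv.ofBijective f (Finite.injective_iff_bijective.mp hinj), ?_⟩
  apply Equiv.ext
  intro I
  by_cases hI : (I : ℕ) < n
  · apply Fin.ext
    rw [e1_val_lt _ I hI]
    show ((f ⟨I, hI⟩ : Fin n) : ℕ) = (π I : ℕ)
    show ((π (Fin.castAdd 1 ⟨(I:ℕ), hI⟩) : Fin (n+1)) : ℕ) = (π I : ℕ)
    have hIe : Fin.castAdd 1 (⟨(I:ℕ), hI⟩ : Fin n) = I := Fin.ext rfl
    rw [hIe]
  · apply Fin.ext
    rw [e1_val_last _ I hI]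
    have hIn : I = ⟨n, Nat.lt_succ_self n⟩ := Fin.ext (show (I:ℕ) = n by have := I.isLt; omega)
    rw [hIn, h]

lemma e2_surj {n : ℕ} (π : Equiv.Perm (Fin (n+2)))
    (h1 : (π ⟨n+1, by omega⟩ : ℕ) = n) (h2 : (π ⟨n, by omega⟩ : ℕ) = n + 1) :
    ∃ σ : Equiv.Perm (Fin n), e2 σ = π := by
  have hval : ∀ i : Fin n, (π (Fin.castAdd 2 i) : ℕ) < n := by
    intro i
    have hb := (π (Fin.castAdd 2 i)).isLt
    have hne1 : (π (Fin.castAdd 2 i) : ℕ) ≠ n + 1 := by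
      intro heq
      have : π (Fin.castAdd 2 i) = π ⟨n, by omega⟩ := Fin.ext (by rw [heq, h2])
      have := congrArg (fun x : Fin (n+2) => (x : ℕ)) (π.injective this)
      simp only [Fin.coe_castAdd, Fin.val_mk] at this
      exact absurd this (Nat.ne_of_lt i.isLt)
    have hne2 : (π (Fin.castAdd 2 i) : ℕ) ≠ n := by
      intro heq
      have : π (Fin.castAdd 2 i) = π ⟨n+1, by omega⟩ := Fin.ext (by rw [heq, h1])
      have := congrArg (fun x : Fin (n+2) => (x : ℕ)) (π.injective this)
      simp only [Fin.coe_castAdd, Fin.val_mk] at this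
      have := i.isLt
      omega
    omega
  let f : Fin n → Fin n := fun i => ⟨π (Fin.castAdd 2 i), hval i⟩
  have hinj : Function.Injective f := by
    intro a b hab
    have hv := congrArg (fun x : Fin n => (x : ℕ)) hab
    simp only [f] at hv
    have h3 := π.injective (Fin.ext hv : π (Fin.castAdd 2 a) = π (Fin.castAdd 2 b))
    exact Fin.ext (by simpa [Fin.coe_castAdd] using congrArg (fun x : Fin (n+2) => (x : ℕ)) h3)
  refine ⟨Equiv.ofBijective f (Finite.injective_iff_bijective.mp hinj), ?_⟩
  apply Equiv.ext
  intro I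
  by_cases hI : (I : ℕ) < n
  · apply Fin.ext
    rw [e2_val_lt _ I hI]
    show ((π (Fin.castAdd 2 ⟨(I:ℕ), hI⟩) : Fin (n+2)) : ℕ) = (π I : ℕ)
    have hIe : Fin.castAdd 2 (⟨(I:ℕ), hI⟩ : Fin n) = I := Fin.ext rfl
    rw [hIe]
  · by_cases hIn : (I : ℕ) = n
    · apply Fin.ext
      rw [e2_val_n _ I hIn]
      have : I = ⟨n, by omega⟩ := Fin.ext hIn
      rw [this, h2]
    · have hIn1 : (I : ℕ) = n + 1 := by have := I.isLt; omega
      apply Fin.ext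
      rw [e2_val_n1 _ I hIn1]
      have : I = ⟨n+1, by omega⟩ := Fin.ext hIn1
      rw [this, h1]

lemma nice_top {n : ℕ} {π : Equiv.Perm (Fin (n+2))} (hN : Nice π)
    (h : (π ⟨n+1, by omega⟩ : ℕ) = n) : (π ⟨n, by omega⟩ : ℕ) = n + 1 := by
  obtain ⟨A, B⟩ := hN
  set L : Fin (n+2) := ⟨n+1, by omega⟩ with hL
  set p : Fin (n+2) := π.symm ⟨n+1, by omega⟩ with hp
  have hπp : π p = ⟨n+1, by omega⟩ := π.apply_symm_apply _
  have hpne : p ≠ L := by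
    intro he
    rw [he] at hπp
    have := congrArg (fun x : Fin (n+2) => (x : ℕ)) hπp
    simp only [Fin.val_mk] at this
    omega
  have hplt : p < L := by
    apply Fin.lt_def.mpr
    have := p.isLt
    have hv : (p : ℕ) ≠ n + 1 := fun hc => hpne (Fin.ext hc)
    simp only [hL, Fin.val_mk]
    omega
  have hlt : π L < π p := by
    apply Fin.lt_def.mpr
    rw [hπp]
    simp only [Fin.val_mk]
    omega
  have := A p L hplt hlt
  rw [hπp] at this
  simp only [Fin.val_mk, hL] at this
  rw [h] at this
  have hpv : (p : ℕ) = n := by omega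
  have : (⟨n, by omega⟩ : Fin (n+2)) = p := Fin.ext hpv.symm
  rw [this, hπp]


lemma sum_range_id_choose (N : ℕ) : ∑ i ∈ Finset.range N, i = N.choose 2 := by
  induction N with
  | zero => simp
  | succ m ih => rw [Finset.sum_range_succ, ih, Nat.choose]; simp [Nat.choose_one_right]; omega

lemma card_lt_pairs (N : ℕ) :
    (Finset.univ.filter (fun p : Fin N × Fin N => p.1 < p.2)).card = N.choose 2 := by
  rw [Finset.card_eq_sum_card_fiberwise
    (f := Prod.snd) (t := Finset.univ) (fun x _ => Finset.mem_univ _)]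
  have hfib : ∀ b : Fin N,
      ((Finset.univ.filter (fun p : Fin N × Fin N => p.1 < p.2)).filter
        (fun p => p.snd = b)).card = (b : ℕ) := by
    intro b
    have : ((Finset.univ.filter (fun p : Fin N × Fin N => p.1 < p.2)).filter
        (fun p => p.snd = b)).card = (Finset.Iio b).card := by
      apply Finset.card_bij (fun p _ => p.1)
      · intro p hp
        simp only [Finset.mem_filter, Finset.mem_univ, true_and, Finset.mem_Iio] at hp ⊢
        rcases hp with ⟨h1, h2⟩
        rw [← h2]; exact h1
      · intro p hp q hq he
        simp only [Finset.mem_filter] at hp hq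
        exact Prod.ext he (hp.2.trans hq.2.symm)
      · intro a ha
        simp only [Finset.mem_Iio] at ha
        exact ⟨(a, b), by simp [ha], rfl⟩
    rw [this, Fin.card_Iio]
  rw [Finset.sum_congr rfl (fun b _ => hfib b)]
  rw [Fin.sum_univ_eq_sum_range (fun i => i) N]
  exact sum_range_id_choose N

lemma invNum_rev {n : ℕ} : invNum (Fin.revPerm : Equiv.Perm (Fin n)) = n.choose 2 := by
  unfold invNum
  rw [← card_lt_pairs n]
  congr 1
  apply Finset.filter_congr
  intro p _
  constructor
  · rintro ⟨h, _⟩; exact h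
  · intro h
    exact ⟨h, Fin.rev_lt_rev.mpr h⟩

lemma nice_rev {n : ℕ} : Nice (Fin.revPerm : Equiv.Perm (Fin n)) := by
  constructor
  · intro i j hij hji
    show (Fin.rev i : ℕ) + (i:ℕ) = (Fin.rev j : ℕ) + (j:ℕ)
    rw [Fin.val_rev, Fin.val_rev]
    have := i.isLt
    have := j.isLt
    omega
  · intro t i j hti hij h2 hji
    show Fin.rev j ≤ Fin.rev t
    apply Fin.le_def.mpr
    rw [Fin.val_rev, Fin.val_rev]
    have : (t:ℕ) < i := hti
    have : (i:ℕ) < j := hij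
    omega

lemma nice_one {n : ℕ} : Nice (1 : Equiv.Perm (Fin n)) := by
  constructor
  · intro i j hij hji
    simp only [Equiv.Perm.one_apply] at hji
    exact absurd (hij.trans hji) (lt_irrefl _)
  · intro t i j hti hij h2 hji
    simp only [Equiv.Perm.one_apply] at hji
    exact absurd (hij.trans hji) (lt_irrefl _)

lemma invNum_one {n : ℕ} : invNum (1 : Equiv.Perm (Fin n)) = 0 := by
  unfold invNum
  rw [Finset.card_eq_zero]
  ext p
  simp only [Finset.mem_filter, Finset.mem_univ, true_and, Finset.notMem_empty, iff_false]
  rintro ⟨h1, h2⟩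
  simp only [Equiv.Perm.one_apply] at h2
  exact absurd (h1.trans h2) (lt_irrefl _)

lemma rev_of_nice {n : ℕ} {π : Equiv.Perm (Fin (n+2))} (hN : Nice π)
    (h : (π ⟨n+1, by omega⟩ : ℕ) < n) : π = Fin.revPerm := by
  obtain ⟨A, B⟩ := hN
  set L : Fin (n+2) := ⟨n+1, by omega⟩ with hL
  have hLval : (L : ℕ) = n + 1 := rfl
  -- value of π L is 0
  have hv0 : (π L : ℕ) = 0 := by
    by_contra hv
    -- position of the max value n+1
    obtain ⟨p, hπp⟩ : ∃ p : Fin (n+2), π p = ⟨n+1, by omega⟩ :=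
      ⟨π.symm _, π.apply_symm_apply _⟩
    have hπpv : (π p : ℕ) = n + 1 := by rw [hπp]
    have hpval : (p : ℕ) = (π L : ℕ) := by
      have hpne : (p : ℕ) ≠ n + 1 := by
        intro he
        have : p = L := Fin.ext (by rw [he, hLval])
        rw [this] at hπpv
        omega
      have hplt : p < L := Fin.lt_def.mpr (by have := p.isLt; rw [hLval]; omega)
      have hlt : π L < π p := Fin.lt_def.mpr (by rw [hπpv]; have := (π L).isLt; omega)
      have := A p L hplt hlt
      rw [hπpv, hLval] at this
      omega
    -- position of the value 0
    obtain ⟨z, hπz⟩ : ∃ z : Fin (n+2), π z = ⟨0, by omega⟩ :=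
      ⟨π.symm _, π.apply_symm_apply _⟩
    have hπzv : (π z : ℕ) = 0 := by rw [hπz]
    have hzp : z < p := by
      rcases lt_trichotomy z p with hlt | heq | hgt
      · exact hlt
      · exfalso; rw [heq] at hπzv; omega
      · exfalso
        have hlt : π z < π p := Fin.lt_def.mpr (by omega)
        have := A p z hgt (by rw [hπp] at hlt ⊢; exact Fin.lt_def.mpr (by rw [hπzv]; omega))
        rw [hπzv, hπpv] at this
        have := z.isLt
        omega
    have hpL : p < L := Fin.lt_def.mpr (by rw [hLval, hpval]; omega)
    have h2c : (p : ℕ) + 2 ≤ (L : ℕ) := by rw [hLval, hpval]; omega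
    have hπLp : π L < π p := Fin.lt_def.mpr (by rw [hπpv]; have := (π L).isLt; omega)
    have := B z p L hzp hpL h2c hπLp
    have : (π L : ℕ) ≤ (π z : ℕ) := this
    omega
  -- now every value is determined
  apply Equiv.ext
  intro I
  apply Fin.ext
  show (π I : ℕ) = (Fin.rev I : ℕ)
  rw [Fin.val_rev]
  rcases eq_or_ne I L with rfl | hne
  · rw [hv0, hLval]; omega
  · have hIL : I < L := by
      apply Fin.lt_def.mpr
      have := I.isLt
      have : (I : ℕ) ≠ n + 1 := fun hc => hne (Fin.ext (by rw [hc, hLval]))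
      rw [hLval]
      omega
    have hπI : π L < π I := by
      apply Fin.lt_def.mpr
      rw [hv0]
      have : π I ≠ π L := fun hc => hne (π.injective hc)
      have : (π I : ℕ) ≠ (π L : ℕ) := fun hc => this (Fin.ext hc)
      omega
    have := A I L hIL hπI
    rw [hv0, hLval] at this
    have := I.isLt
    omega


noncomputable def NiceCount (n k : ℕ) : ℕ :=
  (Finset.univ.filter (fun π : Equiv.Perm (Fin n) => Nice π ∧ invNum π = k)).card

lemma perm_eq_one_of_le_one {n : ℕ} (hn : n ≤ 1) (π : Equiv.Perm (Fin n)) : π = 1 := by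
  apply Equiv.ext
  intro i
  apply Fin.ext
  have h1 := (π i).isLt
  have h2 := i.isLt
  simp only [Equiv.Perm.one_apply]
  omega

lemma niceCount_le_one {n : ℕ} (hn : n ≤ 1) (k : ℕ) :
    NiceCount n k = if k = 0 then 1 else 0 := by
  unfold NiceCount
  have huniv : (Finset.univ : Finset (Equiv.Perm (Fin n))) = {1} := by
    ext π
    simp [perm_eq_one_of_le_one hn π]
  rw [huniv, Finset.filter_singleton]
  by_cases hk : k = 0
  · subst hk
    rw [if_pos ⟨nice_one, invNum_one⟩, if_pos rfl, Finset.card_singleton]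
  · rw [if_neg (fun h => hk (h.2.symm.trans invNum_one)), if_neg hk, Finset.card_empty]

lemma invNum_pos {n : ℕ} {π : Equiv.Perm (Fin n)} {i j : Fin n} (hij : i < j)
    (hji : π j < π i) : 1 ≤ invNum π := by
  unfold invNum
  rw [Nat.succ_le_iff, Finset.card_pos]
  exact ⟨(i, j), by simp [hij, hji]⟩

lemma niceCount_rec (m k : ℕ) :
    NiceCount (m+2) k = (if 1 ≤ m ∧ k = (m+2).choose 2 then 1 else 0)
      + NiceCount (m+1) k + (if k = 0 then 0 else NiceCount m (k-1)) := by
  classical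
  set L : Fin (m+2) := ⟨m+1, by omega⟩ with hL
  have hLval : (L : ℕ) = m + 1 := rfl
  set S : Finset (Equiv.Perm (Fin (m+2))) :=
    Finset.univ.filter (fun π => Nice π ∧ invNum π = k) with hS
  have hsplit1 := Finset.card_filter_add_card_filter_not
    (s := S) (p := fun π => (π L : ℕ) = m + 1)
  have hsplit2 := Finset.card_filter_add_card_filter_not
    (s := S.filter (fun π => ¬ (π L : ℕ) = m + 1)) (p := fun π => (π L : ℕ) = m)
  -- first part: card = NiceCount (m+1) k
  have hc1 : (S.filter (fun π => (π L : ℕ) = m + 1)).card = NiceCount (m+1) k := by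
    symm
    unfold NiceCount
    apply Finset.card_bij (fun σ (_ : σ ∈ Finset.univ.filter
      (fun σ : Equiv.Perm (Fin (m+1)) => Nice σ ∧ invNum σ = k)) => e1 σ)
    · intro σ hσ
      simp only [hS, Finset.mem_filter, Finset.mem_univ, true_and] at hσ ⊢
      exact ⟨⟨(nice_e1 σ).mpr hσ.1, (invNum_e1 σ).trans hσ.2⟩,
        e1_val_last σ L (by omega)⟩
    · intro σ hσ τ hτ he
      apply Equiv.ext
      intro i
      have := congrArg (fun ρ : Equiv.Perm (Fin (m+2)) => ρ (Fin.castAdd 1 i)) he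
      simp only [e1_app] at this
      exact Fin.ext (by simpa [Fin.coe_castAdd] using congrArg (fun x : Fin (m+2) => (x:ℕ)) this)
    · intro π hπ
      simp only [hS, Finset.mem_filter, Finset.mem_univ, true_and] at hπ
      obtain ⟨⟨hN, hk⟩, hQ⟩ := hπ
      obtain ⟨σ, hσ⟩ := e1_surj π hQ
      refine ⟨σ, ?_, hσ⟩
      simp only [Finset.mem_filter, Finset.mem_univ, true_and]
      rw [← hσ] at hN hk
      exact ⟨(nice_e1 σ).mp hN, (invNum_e1 σ).symm.trans hk⟩
  -- second part
  have hQ2eq : (S.filter (fun π => ¬ (π L : ℕ) = m + 1)).filter (fun π => (π L : ℕ) = m)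
      = S.filter (fun π => (π L : ℕ) = m) := by
    ext π
    simp only [Finset.mem_filter]
    constructor
    · rintro ⟨⟨h1, _⟩, h3⟩; exact ⟨h1, h3⟩
    · rintro ⟨h1, h2⟩; exact ⟨⟨h1, by omega⟩, h2⟩
  have hc2 : (S.filter (fun π => (π L : ℕ) = m)).card
      = (if k = 0 then 0 else NiceCount m (k-1)) := by
    by_cases hk : k = 0
    · rw [if_pos hk]
      rw [Finset.card_eq_zero]
      ext π
      simp only [hS, Finset.mem_filter, Finset.mem_univ, true_and, Finset.notMem_empty, iff_false]
      rintro ⟨⟨hN, hinv⟩, hQ⟩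
      have htop := nice_top hN hQ
      have hlt : π L < π ⟨m, by omega⟩ := Fin.lt_def.mpr (by rw [hQ, htop]; omega)
      have := invNum_pos (Fin.lt_def.mpr (by rw [hLval]; simp [Fin.val_mk]) :
        (⟨m, by omega⟩ : Fin (m+2)) < L) hlt
      omega
    · rw [if_neg hk]
      symm
      unfold NiceCount
      apply Finset.card_bij (fun σ (_ : σ ∈ Finset.univ.filter
        (fun σ : Equiv.Perm (Fin m) => Nice σ ∧ invNum σ = k - 1)) => e2 σ)
      · intro σ hσ
        simp only [hS, Finset.mem_filter, Finset.mem_univ, true_and] at hσ ⊢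
        refine ⟨⟨(nice_e2 σ).mpr hσ.1, ?_⟩, e2_val_n1 σ L rfl⟩
        rw [invNum_e2 σ, hσ.2]
        omega
      · intro σ hσ τ hτ he
        apply Equiv.ext
        intro i
        have := congrArg (fun ρ : Equiv.Perm (Fin (m+2)) => ρ (Fin.castAdd 2 i)) he
        simp only [e2_app] at this
        exact Fin.ext (by simpa [Fin.coe_castAdd] using congrArg (fun x : Fin (m+2) => (x:ℕ)) this)
      · intro π hπ
        simp only [hS, Finset.mem_filter, Finset.mem_univ, true_and] at hπ
        obtain ⟨⟨hN, hkk⟩, hQ⟩ := hπ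
        have htop := nice_top hN hQ
        obtain ⟨σ, hσ⟩ := e2_surj π hQ htop
        refine ⟨σ, ?_, hσ⟩
        simp only [Finset.mem_filter, Finset.mem_univ, true_and]
        rw [← hσ] at hN hkk
        have := invNum_e2 σ
        exact ⟨(nice_e2 σ).mp hN, by omega⟩
  -- third part
  have hc3 : ((S.filter (fun π => ¬ (π L : ℕ) = m + 1)).filter (fun π => ¬ (π L : ℕ) = m)).card
      = (if 1 ≤ m ∧ k = (m+2).choose 2 then 1 else 0) := by
    have hmem : ∀ π ∈ (S.filter (fun π => ¬ (π L : ℕ) = m + 1)).filter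
        (fun π => ¬ (π L : ℕ) = m), π = Fin.revPerm ∧ 1 ≤ m ∧ k = (m+2).choose 2 := by
      intro π hπ
      simp only [Finset.mem_filter, Finset.mem_univ, true_and, hS] at hπ
      obtain ⟨⟨⟨hN, hk⟩, h1⟩, h2⟩ := hπ
      have hlt : (π L : ℕ) < m := by
        have := (π L).isLt
        omega
      have hrev := rev_of_nice hN hlt
      refine ⟨hrev, ?_, ?_⟩
      · rw [hrev] at hlt
        have : ((Fin.revPerm : Equiv.Perm (Fin (m+2))) L : ℕ) = 0 := by
          show (Fin.rev L : ℕ) = 0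
          rw [Fin.val_rev, hLval]
          omega
        omega
      · rw [← hk, hrev, invNum_rev]
    by_cases hcond : 1 ≤ m ∧ k = (m+2).choose 2
    · rw [if_pos hcond]
      rw [Finset.card_eq_one]
      refine ⟨Fin.revPerm, ?_⟩
      apply Finset.eq_singleton_iff_unique_mem.mpr
      constructor
      · simp only [Finset.mem_filter, Finset.mem_univ, true_and, hS]
        have hrv : ((Fin.revPerm : Equiv.Perm (Fin (m+2))) L : ℕ) = 0 := by
          show (Fin.rev L : ℕ) = 0
          rw [Fin.val_rev, hLval]
          omega
        refine ⟨⟨⟨nice_rev, by rw [invNum_rev, hcond.2]⟩, ?_⟩, ?_⟩ <;> omega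
      · intro π hπ
        exact (hmem π hπ).1
    · rw [if_neg hcond]
      rw [Finset.card_eq_zero]
      by_contra hne
      obtain ⟨π, hπ⟩ := Finset.nonempty_of_ne_empty hne
      exact hcond (hmem π hπ).2
  -- assemble
  have : NiceCount (m+2) k = S.card := rfl
  rw [this, ← hsplit1, ← hsplit2, hc1, hQ2eq, hc2, hc3]
  ring


noncomputable def Tz (n : ℕ) (q : ℤ) : ℤ :=
  ∑ ℓ ∈ Finset.Icc 1 n, C ((n : ℤ) - ℓ - (q - C (ℓ : ℤ) 2)) (q - C (ℓ : ℤ) 2)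

lemma C_nonneg (a b : ℤ) : 0 ≤ _root_.C a b := by
  unfold _root_.C; split_ifs
  · positivity
  · exact le_refl 0

lemma C_of_neg {a b : ℤ} (h : b < 0) : _root_.C a b = 0 := by
  unfold _root_.C; rw [if_neg (by omega)]

lemma C_neg_self (q : ℤ) : _root_.C (-q) q = if q = 0 then 1 else 0 := by
  unfold _root_.C
  by_cases h : q = 0
  · subst h; norm_num
  · rw [if_neg h, if_neg (by omega)]

lemma C_neg_one_sub (q : ℤ) : _root_.C (-1 - q) q = 0 := by
  unfold _root_.C; rw [if_neg (by omega)]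

lemma C_coe_choose_two (n : ℕ) : _root_.C (n : ℤ) 2 = (n.choose 2 : ℤ) := by
  unfold _root_.C
  by_cases h : 2 ≤ n
  · rw [if_pos ⟨by norm_num, by exact_mod_cast h⟩]
    simp
  · rw [if_neg (by omega), Nat.choose_eq_zero_of_lt (by omega)]
    simp

lemma C_pascal (a b : ℤ) (h : ¬(a = -1 ∧ b = 0)) : _root_.C (a+1) b = _root_.C a b + _root_.C a (b-1) := by
  unfold _root_.C
  by_cases hb : b < 0
  · rw [if_neg (by omega), if_neg (by omega), if_neg (by omega)]; simp
  push_neg at hb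
  by_cases hb0 : b = 0
  · subst hb0
    by_cases ha : 0 ≤ a
    · rw [if_pos ⟨le_refl 0, by omega⟩, if_pos ⟨le_refl 0, ha⟩, if_neg (by omega)]
      simp
    · rw [if_neg (by omega), if_neg (by omega), if_neg (by omega)]; simp
  · have hb1 : 1 ≤ b := by omega
    by_cases hba : b ≤ a
    · rw [if_pos ⟨hb, by omega⟩, if_pos ⟨hb, hba⟩, if_pos ⟨by omega, by omega⟩]
      have h1 : (a+1).toNat = a.toNat + 1 := by omega
      have h2 : b.toNat = (b-1).toNat + 1 := by omega
      rw [h1, h2, Nat.choose_succ_succ]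
      push_cast
      ring
    · by_cases hba1 : b ≤ a + 1
      · rw [if_pos ⟨hb, hba1⟩, if_neg (by omega), if_pos ⟨by omega, by omega⟩]
        have e1 : b.toNat = (a+1).toNat := by omega
        rw [e1, Nat.choose_self]
        have e2 : (b-1).toNat = a.toNat := by omega
        rw [e2, Nat.choose_self]
        simp
      · rw [if_neg (by omega), if_neg (by omega), if_neg (by omega)]; simp

lemma Tz_zero (q : ℤ) : Tz 0 q = 0 := by simp [Tz]

lemma Tz_one (q : ℤ) : Tz 1 q = if q = 0 then 1 else 0 := by
  unfold Tz
  rw [show Finset.Icc 1 1 = {1} from rfl, Finset.sum_singleton]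
  have h1 : _root_.C ((1:ℕ) : ℤ) 2 = 0 := by rw [C_coe_choose_two]; simp
  rw [h1]
  have : ((1:ℕ):ℤ) - ((1:ℕ):ℤ) - (q - 0) = -q := by push_cast; ring
  rw [this]
  rw [show q - 0 = q from by ring]
  exact C_neg_self q

lemma Tz_neg {n : ℕ} {q : ℤ} (h : q < 0) : Tz n q = 0 := by
  unfold Tz
  apply Finset.sum_eq_zero
  intro ℓ _
  apply C_of_neg
  have := C_nonneg (ℓ : ℤ) 2
  omega

lemma Tz_rec (m : ℕ) (q : ℤ) :
    Tz (m+2) q = (if q = _root_.C ((m:ℤ)+2) 2 then 1 else 0) + Tz (m+1) q + Tz m (q-1) := by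
  unfold Tz
  rw [Finset.sum_Icc_succ_top (by omega)]
  have htop : (((m+2:ℕ)):ℤ) - ((m+2:ℕ):ℤ) - (q - _root_.C (((m+2:ℕ)):ℤ) 2) = -(q - _root_.C (((m+2:ℕ)):ℤ) 2) := by
    ring
  rw [htop, C_neg_self]
  have hterm : _root_.C (((m+2:ℕ)):ℤ) 2 = _root_.C ((m:ℤ)+2) 2 := by norm_num
  have hdelta : (if q - _root_.C (((m+2:ℕ)):ℤ) 2 = 0 then (1:ℤ) else 0)
      = (if q = _root_.C ((m:ℤ)+2) 2 then 1 else 0) := by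
    rw [hterm]
    by_cases h : q = _root_.C ((m:ℤ)+2) 2
    · rw [if_pos h, if_pos (by omega)]
    · rw [if_neg h, if_neg (by omega)]
  rw [hdelta]
  have hsplit : ∀ ℓ ∈ Finset.Icc 1 (m+1),
      _root_.C (((m+2:ℕ):ℤ) - (ℓ:ℤ) - (q - _root_.C (ℓ:ℤ) 2)) (q - _root_.C (ℓ:ℤ) 2)
      = _root_.C (((m+1:ℕ):ℤ) - (ℓ:ℤ) - (q - _root_.C (ℓ:ℤ) 2)) (q - _root_.C (ℓ:ℤ) 2)
        + _root_.C (((m:ℕ):ℤ) - (ℓ:ℤ) - ((q-1) - _root_.C (ℓ:ℤ) 2)) ((q-1) - _root_.C (ℓ:ℤ) 2) := by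
    intro ℓ hℓ
    simp only [Finset.mem_Icc] at hℓ
    have hside : ¬((((m+1:ℕ):ℤ) - (ℓ:ℤ) - (q - _root_.C (ℓ:ℤ) 2)) = -1 ∧ (q - _root_.C (ℓ:ℤ) 2) = 0) := by
      rintro ⟨ha, hb⟩
      have hℓ2 : (ℓ:ℤ) ≤ ((m+1:ℕ):ℤ) := by exact_mod_cast hℓ.2
      omega
    have hp := C_pascal (((m+1:ℕ):ℤ) - (ℓ:ℤ) - (q - _root_.C (ℓ:ℤ) 2)) (q - _root_.C (ℓ:ℤ) 2) hside
    rw [show (((m+2:ℕ):ℤ) - (ℓ:ℤ) - (q - _root_.C (ℓ:ℤ) 2))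
        = (((m+1:ℕ):ℤ) - (ℓ:ℤ) - (q - _root_.C (ℓ:ℤ) 2)) + 1 from by push_cast; ring]
    rw [show (((m:ℕ):ℤ) - (ℓ:ℤ) - ((q-1) - _root_.C (ℓ:ℤ) 2))
        = (((m+1:ℕ):ℤ) - (ℓ:ℤ) - (q - _root_.C (ℓ:ℤ) 2)) from by push_cast; ring]
    rw [show ((q-1) - _root_.C (ℓ:ℤ) 2) = (q - _root_.C (ℓ:ℤ) 2) - 1 from by ring]
    exact hp
  rw [Finset.sum_congr rfl hsplit, Finset.sum_add_distrib]
  have hsecond : ∑ ℓ ∈ Finset.Icc 1 (m+1),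
      _root_.C (((m:ℕ):ℤ) - (ℓ:ℤ) - ((q-1) - _root_.C (ℓ:ℤ) 2)) ((q-1) - _root_.C (ℓ:ℤ) 2)
      = ∑ ℓ ∈ Finset.Icc 1 m,
      _root_.C (((m:ℕ):ℤ) - (ℓ:ℤ) - ((q-1) - _root_.C (ℓ:ℤ) 2)) ((q-1) - _root_.C (ℓ:ℤ) 2) := by
    rw [Finset.sum_Icc_succ_top (by omega)]
    have : (((m:ℕ):ℤ) - ((m+1:ℕ):ℤ) - ((q-1) - _root_.C (((m+1:ℕ)):ℤ) 2))
        = -1 - ((q-1) - _root_.C (((m+1:ℕ)):ℤ) 2) := by push_cast; ring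
    rw [this, C_neg_one_sub]
    ring
  rw [hsecond]
  ring

lemma main_count : ∀ n : ℕ, 1 ≤ n → ∀ k : ℕ, (NiceCount n k : ℤ) = Tz n (k : ℤ) := by
  intro n
  induction n using Nat.strong_induction_on with
  | _ n ih =>
    match n with
    | 0 => intro h; omega
    | 1 =>
      intro _ k
      rw [niceCount_le_one (le_refl 1) k, Tz_one]
      by_cases hk : k = 0
      · subst hk; norm_num
      · rw [if_neg hk, if_neg (by exact_mod_cast hk)]; norm_num
    | 2 =>
      intro _ k
      rw [show (2:ℕ) = 0 + 2 from rfl, niceCount_rec 0 k, Tz_rec 0 (k:ℤ)]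
      rw [niceCount_le_one (by omega) k]
      rw [if_neg (by omega), Tz_one, Tz_zero]
      have hC : _root_.C (((0:ℕ):ℤ)+2) 2 = 1 := by norm_num [_root_.C]
      rw [hC]
      match k with
      | 0 => norm_num [niceCount_le_one]
      | 1 =>
        rw [if_neg (by omega), if_neg (by omega), niceCount_le_one (by omega)]
        norm_num
      | (k+2) =>
        rw [if_neg (by omega), if_neg (by norm_num), if_neg (by omega),
          niceCount_le_one (by omega)]
        rw [if_neg (by omega)]
        push_cast
        rw [if_neg (show ¬((k:ℤ) + 2 = 0) by omega)]
        ring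
    | (m+3) =>
      intro _ k
      have ih1 := ih (m+2) (by omega) (by omega)
      have ih2 := ih (m+1) (by omega) (by omega)
      rw [show m+3 = (m+1) + 2 from rfl, niceCount_rec (m+1) k, Tz_rec (m+1) (k:ℤ)]
      push_cast
      rw [ih1 k]
      have hdelta : ((if 1 ≤ m+1 ∧ k = (m+3).choose 2 then (1:ℕ) else 0) : ℤ)
          = (if (k:ℤ) = _root_.C (((m+1):ℤ)+2) 2 then 1 else 0) := by
        have hCC : _root_.C (((m+1):ℤ)+2) 2 = ((m+3).choose 2 : ℤ) := by
          rw [show ((m+1):ℤ)+2 = ((m+3:ℕ):ℤ) from by push_cast; ring, C_coe_choose_two]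
        rw [hCC]
        by_cases h : k = (m+3).choose 2
        · rw [if_pos ⟨by omega, h⟩, if_pos (by exact_mod_cast h)]; norm_num
        · rw [if_neg (by tauto), if_neg (by exact_mod_cast h)]
      have hlast : ((if k = 0 then (0:ℕ) else NiceCount (m+1) (k-1)) : ℤ)
          = Tz (m+1) ((k:ℤ)-1) := by
        by_cases hk : k = 0
        · subst hk
          rw [if_pos rfl, Tz_neg (by omega)]
          norm_num
        · rw [if_neg hk, ih2 (k-1)]
          congr 1
          omega
      rw [← hdelta, ← hlast]
      push_cast
      ring



theorem stmt13 (n k : ℕ) (hn : 1 ≤ n) :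
    ({π : Equiv.Perm (Fin n) | AvoidsAll π [[2,3,1],[3,1,2],[1,4,3,2]] ∧ invNum π = k}.ncard : ℤ) =
      ∑ ℓ ∈ Finset.Icc 1 n,
        C ((n : ℤ) - ℓ - ((k : ℤ) - C (ℓ : ℤ) 2)) ((k : ℤ) - C (ℓ : ℤ) 2) := by

  have hset : {π : Equiv.Perm (Fin n) | AvoidsAll π [[2,3,1],[3,1,2],[1,4,3,2]] ∧ invNum π = k}
      = ↑(Finset.univ.filter (fun π : Equiv.Perm (Fin n) => Nice π ∧ invNum π = k)) := by
    ext π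
    simp [avoids_iff_nice]
  rw [hset, Set.ncard_coe_finset]
  exact main_count n hn k
end

section
/- Define F_n(q) = Σ_{π ∈ Av_n(231,312,321)} q^{inv(π)} and G_n(v,q) = Σ_{π ∈ Av_n(231,312,4321,21543)} v^{Fib(π)} q^{inv(π)}. Then for all n ≥ 3, G_n(v,q) = F_n(q)·v^n + Σ_{j=0}^{n-3} q^3·v^j·F_j(q). -/
open Finset MvPolynomial
open scoped Classical

/-!
Avoiding 231 and 312 means that every descent drops by exactly one. For such permutations,
containing 321, 4321 or 21543 amounts to having two consecutive descents, three consecutive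
descents, or a descent followed later by two consecutive descents. Hence a permutation avoiding
231, 312, 4321 and 21543 either avoids 321, so it is a Fibonacci permutation with `Fib π = n`,
or its first descent, at `a`, is a double descent; this forces `π = 12⋯a ⊕ 321 ⊕ σ` with `σ`
a Fibonacci permutation of length `t = n - 3 - a`, and then `Fib π = t`, `inv π = inv σ + 3`.
-/

open Equiv

section NatPerm

variable {n : ℕ}

/-- `π` extended by the identity to all of `ℕ`: pattern and descent conditions on `π` then
become linear arithmetic on positions and values. -/
def natPerm (π : Perm (Fin n)) : Perm ℕ := π.extendDomain Fin.equivSubtype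

lemma natPerm_of_lt (π : Perm (Fin n)) {i : ℕ} (h : i < n) : natPerm π i = π ⟨i, h⟩ := by
  rw [natPerm, Perm.extendDomain_apply_subtype (b := i) _ _ h]; rfl

lemma natPerm_fin (π : Perm (Fin n)) (i : Fin n) : natPerm π i = π i :=
  natPerm_of_lt π i.isLt

lemma natPerm_of_le (π : Perm (Fin n)) {i : ℕ} (h : n ≤ i) : natPerm π i = i :=
  Perm.extendDomain_apply_not_subtype _ _ (by simpa using h)

lemma natPerm_lt (π : Perm (Fin n)) {i : ℕ} (h : i < n) : natPerm π i < n := by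
  rw [natPerm_of_lt π h]; exact Fin.isLt _

lemma natPerm_injective : Function.Injective (natPerm : Perm (Fin n) → Perm ℕ) :=
  Perm.extendDomainHom_injective Fin.equivSubtype

lemma exists_natPerm_eq (π : Perm (Fin n)) {v : ℕ} (hv : v < n) :
    ∃ w < n, natPerm π w = v := by
  refine ⟨(natPerm π).symm v, ?_, (natPerm π).apply_symm_apply v⟩
  by_contra! h
  have := natPerm_of_le π h
  rw [Equiv.apply_symm_apply] at this
  omega

lemma finCongr_permCongr_invariant {α : Sort*} (P : ∀ {n : ℕ}, Perm (Fin n) → α) {m : ℕ}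
    (h : m = n) (π : Perm (Fin m)) : P ((finCongr h).permCongr π) = P π := by
  subst h; rfl

end NatPerm

section Patterns

variable {n : ℕ}

lemma segContainsPat_ofFn_iff (π : Perm (Fin n)) (K : ℕ) {k : ℕ} (x : Fin k → ℕ) :
    SegContainsPat π K (List.ofFn x) ↔ ∃ f : Fin k → ℕ, StrictMono f ∧
      (∀ i, n - K ≤ f i ∧ f i < n) ∧ ∀ i j, x i < x j ↔ natPerm π (f i) < natPerm π (f j) := by
  constructor
  · rintro ⟨f, hf, hK, hx⟩
    refine ⟨fun i => f (Fin.cast (List.length_ofFn).symm i), fun i j hij => hf hij,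
      fun i => ⟨hK _, Fin.isLt _⟩, fun i j => ?_⟩
    have := hx (Fin.cast (List.length_ofFn).symm i) (Fin.cast (List.length_ofFn).symm j)
    simpa only [List.get_ofFn, Fin.cast_cast, Fin.cast_eq_self, Fin.lt_def, natPerm_fin] using this
  · rintro ⟨f, hf, hK, hx⟩
    refine ⟨fun i => ⟨f (Fin.cast List.length_ofFn i), (hK _).2⟩, fun i j hij => hf hij,
      fun i => (hK _).1, fun i j => ?_⟩
    rw [List.get_ofFn, List.get_ofFn, Fin.lt_def, ← natPerm_fin, ← natPerm_fin]
    exact hx _ _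

lemma segContainsPat_iff (π : Perm (Fin n)) (K : ℕ) (p : List ℕ) :
    SegContainsPat π K p ↔ ∃ f : Fin p.length → ℕ, StrictMono f ∧
      (∀ i, n - K ≤ f i ∧ f i < n) ∧
      ∀ i j, p.get i < p.get j ↔ natPerm π (f i) < natPerm π (f j) := by
  conv_lhs => rw [← List.ofFn_get p]
  exact segContainsPat_ofFn_iff π K p.get

lemma containsPat_iff_segContainsPat (π : Perm (Fin n)) (p : List ℕ) :
    ContainsPat π p ↔ SegContainsPat π n p := by
  simp [ContainsPat, SegContainsPat]

lemma segContainsPat_three_iff (π : Perm (Fin n)) (K : ℕ) {x y z : ℕ}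
    (hxy : x ≠ y) (hxz : x ≠ z) (hyz : y ≠ z) :
    SegContainsPat π K [x, y, z] ↔ ∃ i j k, n - K ≤ i ∧ i < j ∧ j < k ∧ k < n ∧
      (x < y ↔ natPerm π i < natPerm π j) ∧ (x < z ↔ natPerm π i < natPerm π k) ∧
      (y < z ↔ natPerm π j < natPerm π k) := by
  rw [show [x, y, z] = List.ofFn ![x, y, z] from rfl, segContainsPat_ofFn_iff]
  constructor
  · rintro ⟨f, hf, hK, hx⟩
    exact ⟨f 0, f 1, f 2, (hK 0).1, hf (by decide), hf (by decide), (hK 2).2,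
      hx 0 1, hx 0 2, hx 1 2⟩
  · rintro ⟨i, j, k, hi, hij, hjk, hk, h₁, h₂, h₃⟩
    have := (natPerm π).injective.ne (show i ≠ j by omega)
    have := (natPerm π).injective.ne (show i ≠ k by omega)
    have := (natPerm π).injective.ne (show j ≠ k by omega)
    refine ⟨![i, j, k], fun u v huv => ?_, fun u => ?_, fun u v => ?_⟩
    · fin_cases u <;> fin_cases v <;> simp at huv ⊢ <;> omega
    · fin_cases u <;> simp <;> omega
    · fin_cases u <;> fin_cases v <;> simp <;> omega

lemma containsPat_three_iff (π : Perm (Fin n)) {x y z : ℕ}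
    (hxy : x ≠ y) (hxz : x ≠ z) (hyz : y ≠ z) :
    ContainsPat π [x, y, z] ↔ ∃ i j k, i < j ∧ j < k ∧ k < n ∧
      (x < y ↔ natPerm π i < natPerm π j) ∧ (x < z ↔ natPerm π i < natPerm π k) ∧
      (y < z ↔ natPerm π j < natPerm π k) := by
  simp [containsPat_iff_segContainsPat, segContainsPat_three_iff π n hxy hxz hyz]

lemma containsPat_4321_iff (π : Perm (Fin n)) :
    ContainsPat π [4, 3, 2, 1] ↔ ∃ i j k l, i < j ∧ j < k ∧ k < l ∧ l < n ∧
      natPerm π l < natPerm π k ∧ natPerm π k < natPerm π j ∧ natPerm π j < natPerm π i := by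
  rw [containsPat_iff_segContainsPat, show [4, 3, 2, 1] = List.ofFn ![4, 3, 2, 1] from rfl,
    segContainsPat_ofFn_iff]
  constructor
  · rintro ⟨f, hf, hK, hx⟩
    exact ⟨f 0, f 1, f 2, f 3, hf (by decide), hf (by decide), hf (by decide), (hK 3).2,
      (hx 3 2).1 (by decide), (hx 2 1).1 (by decide), (hx 1 0).1 (by decide)⟩
  · rintro ⟨i, j, k, l, hij, hjk, hkl, hl, h₁, h₂, h₃⟩
    refine ⟨![i, j, k, l], fun u v huv => ?_, fun u => ?_, fun u v => ?_⟩
    · fin_cases u <;> fin_cases v <;> simp at huv ⊢ <;> omega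
    · fin_cases u <;> simp <;> omega
    · fin_cases u <;> fin_cases v <;> simp <;> omega

lemma containsPat_21543_iff (π : Perm (Fin n)) :
    ContainsPat π [2, 1, 5, 4, 3] ↔ ∃ i₁ i₂ i₃ i₄ i₅, i₁ < i₂ ∧ i₂ < i₃ ∧ i₃ < i₄ ∧ i₄ < i₅ ∧
      i₅ < n ∧ natPerm π i₂ < natPerm π i₁ ∧ natPerm π i₁ < natPerm π i₅ ∧
      natPerm π i₅ < natPerm π i₄ ∧ natPerm π i₄ < natPerm π i₃ := by
  rw [containsPat_iff_segContainsPat, show [2, 1, 5, 4, 3] = List.ofFn ![2, 1, 5, 4, 3] from rfl,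
    segContainsPat_ofFn_iff]
  constructor
  · rintro ⟨f, hf, hK, hx⟩
    exact ⟨f 0, f 1, f 2, f 3, f 4, hf (by decide), hf (by decide), hf (by decide),
      hf (by decide), (hK 4).2, (hx 1 0).1 (by decide), (hx 0 4).1 (by decide),
      (hx 4 3).1 (by decide), (hx 3 2).1 (by decide)⟩
  · rintro ⟨i₁, i₂, i₃, i₄, i₅, h₁₂, h₂₃, h₃₄, h₄₅, h₅, v₁, v₂, v₃, v₄⟩
    refine ⟨![i₁, i₂, i₃, i₄, i₅], fun u v huv => ?_, fun u => ?_, fun u v => ?_⟩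
    · fin_cases u <;> fin_cases v <;> simp at huv ⊢ <;> omega
    · fin_cases u <;> simp <;> omega
    · fin_cases u <;> fin_cases v <;> simp <;> omega

end Patterns

section Descents
variable {n : ℕ}

def IsDescent (π : Perm (Fin n)) (i : ℕ) : Prop :=
  i + 1 < n ∧ natPerm π (i + 1) < natPerm π i

def HasUnitDescents (π : Perm (Fin n)) : Prop :=
  ∀ i, IsDescent π i → natPerm π i = natPerm π (i + 1) + 1

variable {π : Perm (Fin n)}

lemma isDescent_or_lt (π : Perm (Fin n)) {i : ℕ} (h : i + 1 < n) :
    IsDescent π i ∨ natPerm π i < natPerm π (i + 1) := by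
  have := (natPerm π).injective.ne (show i ≠ i + 1 by omega)
  unfold IsDescent
  omega

/-- With unit descents the values cannot jump over `v`. -/
lemma lt_natPerm_of_forall_ne (hπ : HasUnitDescents π) {v j k : ℕ} (hjk : j ≤ k) (hk : k < n)
    (hv : v < natPerm π j) (hne : ∀ m, j < m → m ≤ k → natPerm π m ≠ v) :
    v < natPerm π k := by
  induction k, hjk using Nat.le_induction with
  | base => exact hv
  | succ k hjk ih =>
    have := hne (k + 1) (by omega) le_rfl
    have := ih (by omega) fun m h₁ h₂ => hne m h₁ (by omega)
    rcases isDescent_or_lt π hk with hd | hd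
    · have := hπ k hd; omega
    · omega

lemma natPerm_lt_of_ascent (hπ : HasUnitDescents π) {m l : ℕ}
    (hm : natPerm π m < natPerm π (m + 1)) (hml : m < l) (hl : l < n) :
    natPerm π m < natPerm π l :=
  lt_natPerm_of_forall_ne hπ hml hl hm fun _ h _ => (natPerm π).injective.ne (by omega)

lemma isDescent_of_lt (hπ : HasUnitDescents π) {i l : ℕ} (hil : i < l) (hl : l < n)
    (h : natPerm π l < natPerm π i) : IsDescent π i := by
  refine (isDescent_or_lt π (by omega)).resolve_right fun hi => ?_
  have := natPerm_lt_of_ascent hπ hi hil hl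
  omega

lemma hasUnitDescents_iff (π : Perm (Fin n)) :
    HasUnitDescents π ↔ ¬ ContainsPat π [2, 3, 1] ∧ ¬ ContainsPat π [3, 1, 2] := by
  simp only [containsPat_three_iff π (by decide : 2 ≠ 3) (by decide : 2 ≠ 1) (by decide : 3 ≠ 1),
    containsPat_three_iff π (by decide : 3 ≠ 1) (by decide : 3 ≠ 2) (by decide : 1 ≠ 2)]
  constructor
  · refine fun hπ => ⟨?_, ?_⟩
    · rintro ⟨i, j, k, hij, hjk, hk, h₁, h₂, -⟩
      norm_num at h₁ h₂
      have := lt_natPerm_of_forall_ne hπ hjk.le hk h₁ fun m _ _ =>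
        (natPerm π).injective.ne (show m ≠ i by omega)
      omega
    · rintro ⟨i, j, k, hij, hjk, hk, -, h₂, h₃⟩
      norm_num at h₂ h₃
      have := (natPerm π).injective.ne (show k ≠ i by omega)
      have := lt_natPerm_of_forall_ne hπ hij.le (by omega) (v := natPerm π k) (by omega)
        fun m _ _ => (natPerm π).injective.ne (show m ≠ k by omega)
      omega
  · rintro ⟨h231, h312⟩ m ⟨hm, hdm⟩
    by_contra hne
    obtain ⟨w, hw, hwv⟩ := exists_natPerm_eq π (v := natPerm π (m + 1) + 1)
      (by have := natPerm_lt π (show m < n by omega); omega)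
    have : w ≠ m := by rintro rfl; omega
    have : w ≠ m + 1 := by rintro rfl; omega
    rcases Nat.lt_or_gt_of_ne ‹w ≠ m› with h | h
    · exact h231 ⟨w, m, m + 1, h, by omega, hm, by omega, by omega, by omega⟩
    · exact h312 ⟨m, m + 1, w, by omega, by omega, hw, by omega, by omega, by omega⟩

lemma isDescent_and_isDescent_succ (hπ : HasUnitDescents π) {i j k : ℕ} (hij : i < j)
    (hjk : j < k) (hk : k < n) (hkj : natPerm π k < natPerm π j)
    (hji : natPerm π j < natPerm π i) : IsDescent π i ∧ IsDescent π (i + 1) := by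
  have hi := isDescent_of_lt hπ hij (by omega) hji
  have := hπ i hi
  exact ⟨hi, isDescent_of_lt hπ (show i + 1 < k by omega) hk (by omega)⟩

lemma containsPat_321_iff (hπ : HasUnitDescents π) :
    ContainsPat π [3, 2, 1] ↔ ∃ i, IsDescent π i ∧ IsDescent π (i + 1) := by
  rw [containsPat_three_iff π (by decide) (by decide) (by decide)]
  constructor
  · rintro ⟨i, j, k, hij, hjk, hk, h₁, -, h₃⟩
    norm_num at h₁ h₃
    have := (natPerm π).injective.ne (show i ≠ j by omega)
    have := (natPerm π).injective.ne (show j ≠ k by omega)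
    exact ⟨i, isDescent_and_isDescent_succ hπ hij hjk hk (by omega) (by omega)⟩
  · rintro ⟨i, ⟨-, h₁⟩, ⟨h, h₂⟩⟩
    exact ⟨i, i + 1, i + 1 + 1, by omega, by omega, h, by omega, by omega, by omega⟩

lemma containsPat_4321_iff_of_hasUnitDescents (hπ : HasUnitDescents π) :
    ContainsPat π [4, 3, 2, 1] ↔
      ∃ i, IsDescent π i ∧ IsDescent π (i + 1) ∧ IsDescent π (i + 2) := by
  rw [containsPat_4321_iff]
  constructor
  · rintro ⟨i, j, k, l, hij, hjk, hkl, hl, h₁, h₂, h₃⟩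
    obtain ⟨hi, hi₁⟩ := isDescent_and_isDescent_succ hπ hij hjk (by omega) h₂ h₃
    have := hπ i hi
    exact ⟨i, hi, isDescent_and_isDescent_succ hπ (show i + 1 < k by omega) hkl hl h₁ (by omega)⟩
  · rintro ⟨i, ⟨-, h₁⟩, ⟨-, h₂⟩, ⟨h, h₃⟩⟩
    exact ⟨i, i + 1, i + 2, i + 3, by omega, by omega, by omega, h, h₃, h₂, h₁⟩

lemma exists_descent_lt_doubleDescent (hπ : HasUnitDescents π)
    (h : ContainsPat π [2, 1, 5, 4, 3]) :
    ∃ i j, i < j ∧ IsDescent π i ∧ IsDescent π j ∧ IsDescent π (j + 1) := by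
  obtain ⟨i₁, i₂, i₃, i₄, i₅, h₁₂, h₂₃, h₃₄, h₄₅, h₅, v₁, -, v₃, v₄⟩ :=
    (containsPat_21543_iff π).1 h
  exact ⟨i₁, i₃, by omega, isDescent_of_lt hπ h₁₂ (by omega) v₁,
    isDescent_and_isDescent_succ hπ h₃₄ h₄₅ h₅ v₃ v₄⟩

lemma containsPat_21543_of_isDescent (hπ : HasUnitDescents π) {i j : ℕ} (hi : IsDescent π i)
    (hi₁ : ¬ IsDescent π (i + 1)) (hij : i + 1 < j) (hj : IsDescent π j)
    (hj₁ : IsDescent π (j + 1)) : ContainsPat π [2, 1, 5, 4, 3] := by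
  obtain ⟨-, hj₂⟩ := hj
  obtain ⟨hn, hj₃⟩ := hj₁
  have hasc := (isDescent_or_lt π (show i + 1 + 1 < n by omega)).resolve_left hi₁
  have := natPerm_lt_of_ascent hπ hasc (show i + 1 < j + 2 by omega) hn
  have := hπ i hi
  have := (natPerm π).injective.ne (show i ≠ j + 2 by omega)
  exact (containsPat_21543_iff π).2 ⟨i, i + 1, j, j + 1, j + 2, by omega, by omega, by omega,
    by omega, hn, by omega, by omega, hj₃, hj₂⟩

end Descents

section Classes
variable {n : ℕ}

lemma avoidsAll_fibonacci_iff (π : Perm (Fin n)) : AvoidsAll π [[2, 3, 1], [3, 1, 2], [3, 2, 1]] ↔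
    HasUnitDescents π ∧ ¬ ∃ i, IsDescent π i ∧ IsDescent π (i + 1) := by
  simp only [AvoidsAll, List.forall_mem_cons, List.not_mem_nil, IsEmpty.forall_iff, implies_true,
    and_true]
  rw [← and_assoc, ← hasUnitDescents_iff]
  exact and_congr_right fun hπ => (containsPat_321_iff hπ).not

lemma avoidsAll_4321_21543_iff (π : Perm (Fin n)) :
    AvoidsAll π [[2, 3, 1], [3, 1, 2], [4, 3, 2, 1], [2, 1, 5, 4, 3]] ↔
      HasUnitDescents π ∧ ¬ ContainsPat π [4, 3, 2, 1] ∧ ¬ ContainsPat π [2, 1, 5, 4, 3] := by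
  simp only [AvoidsAll, List.forall_mem_cons, List.not_mem_nil, IsEmpty.forall_iff, implies_true,
    and_true]
  rw [← and_assoc, ← hasUnitDescents_iff]

lemma avoidsAll_fibonacci_iff_not_containsPat_321 (π : Perm (Fin n)) :
    AvoidsAll π [[2, 3, 1], [3, 1, 2], [3, 2, 1]] ↔
      AvoidsAll π [[2, 3, 1], [3, 1, 2], [4, 3, 2, 1], [2, 1, 5, 4, 3]] ∧
        ¬ ContainsPat π [3, 2, 1] := by
  rw [avoidsAll_fibonacci_iff, avoidsAll_4321_21543_iff]
  constructor
  · rintro ⟨hπ, hdd⟩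
    refine ⟨⟨hπ, fun h => hdd ?_, fun h => hdd ?_⟩, (containsPat_321_iff hπ).not.2 hdd⟩
    · obtain ⟨i, hi, hi₁, -⟩ := (containsPat_4321_iff_of_hasUnitDescents hπ).1 h
      exact ⟨i, hi, hi₁⟩
    · obtain ⟨-, j, -, -, hj, hj₁⟩ := exists_descent_lt_doubleDescent hπ h
      exact ⟨j, hj, hj₁⟩
  · rintro ⟨⟨hπ, -, -⟩, h⟩
    exact ⟨hπ, (containsPat_321_iff hπ).not.1 h⟩

lemma fibStat_eq_of_avoidsAll_fibonacci {π : Perm (Fin n)}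
    (hπ : AvoidsAll π [[2, 3, 1], [3, 1, 2], [3, 2, 1]]) :
    fibStat π = n := by
  refine IsGreatest.csSup_eq ⟨⟨le_rfl, fun i _ => by omega, fun p hp hseg => ?_⟩, fun k hk => hk.1⟩
  exact hπ p hp ((containsPat_iff_segContainsPat π p).2 hseg)

end Classes

section DirectSum
variable {m k : ℕ}

lemma dsum_castAdd_s18 (α : Perm (Fin m)) (β : Perm (Fin k)) (i : Fin m) :
    dsum α β (Fin.castAdd k i) = Fin.castAdd k (α i) := by
  simp [dsum, finSumFinEquiv_symm_apply_castAdd]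

lemma dsum_natAdd_s18 (α : Perm (Fin m)) (β : Perm (Fin k)) (i : Fin k) :
    dsum α β (Fin.natAdd m i) = Fin.natAdd m (β i) := by
  simp [dsum, finSumFinEquiv_symm_apply_natAdd]

lemma natPerm_dsum (α : Perm (Fin m)) (β : Perm (Fin k)) (i : ℕ) :
    natPerm (dsum α β) i = if i < m then natPerm α i else m + natPerm β (i - m) := by
  split_ifs with h
  · rw [natPerm_of_lt α h]
    exact (natPerm_fin _ (Fin.castAdd k ⟨i, h⟩)).trans (by rw [dsum_castAdd_s18]; rfl)
  · rcases lt_or_ge i (m + k) with h' | h'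
    · obtain ⟨d, rfl⟩ := Nat.exists_eq_add_of_le (not_lt.1 h)
      rw [Nat.add_sub_cancel_left, natPerm_of_lt β (show d < k by omega)]
      exact (natPerm_fin _ (Fin.natAdd m ⟨d, by omega⟩)).trans (by rw [dsum_natAdd_s18]; rfl)
    · rw [natPerm_of_le _ h', natPerm_of_le _ (show k ≤ i - m by omega)]
      omega

@[simp] lemma natPerm_one : natPerm (1 : Perm (Fin m)) = 1 := by
  simp [natPerm]

lemma natPerm_perm321 {i : ℕ} (h : i < 3) : natPerm perm321 i = 2 - i := by
  rw [natPerm_of_lt _ h]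
  simp [perm321]

lemma isDescent_dsum_iff (α : Perm (Fin m)) (β : Perm (Fin k)) (i : ℕ) :
    IsDescent (dsum α β) i ↔ IsDescent α i ∨ (m ≤ i ∧ IsDescent β (i - m)) := by
  simp only [IsDescent, natPerm_dsum]
  split_ifs with h₁ h₂ h₂
  · omega
  · omega
  · have := natPerm_lt α h₂; omega
  · rw [show i + 1 - m = i - m + 1 by omega]; omega

lemma hasUnitDescents_dsum_iff (α : Perm (Fin m)) (β : Perm (Fin k)) :
    HasUnitDescents (dsum α β) ↔ HasUnitDescents α ∧ HasUnitDescents β := by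
  constructor
  · intro h
    refine ⟨fun i hi => ?_, fun i hi => ?_⟩
    · have := h i ((isDescent_dsum_iff α β i).2 (.inl hi))
      rwa [natPerm_dsum, natPerm_dsum, if_pos hi.1, if_pos (by have := hi.1; omega)] at this
    · have := h (m + i) ((isDescent_dsum_iff α β _).2 (.inr ⟨by omega, by simpa using hi⟩))
      rw [natPerm_dsum, natPerm_dsum, if_neg (by omega), if_neg (by omega),
        show m + i + 1 - m = i + 1 by omega, show m + i - m = i by omega] at this
      omega
  · rintro ⟨hα, hβ⟩ i hi
    rcases (isDescent_dsum_iff α β i).1 hi with hi | ⟨hm, hi⟩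
    · rw [natPerm_dsum, natPerm_dsum, if_pos hi.1, if_pos (by have := hi.1; omega)]
      exact hα i hi
    · have := hβ _ hi
      rw [natPerm_dsum, natPerm_dsum, if_neg (by omega), if_neg (by omega),
        show i + 1 - m = i - m + 1 by omega]
      omega

lemma invNum_eq_sum {n : ℕ} (π : Perm (Fin n)) :
    invNum π = ∑ i, ∑ j, if i < j ∧ π j < π i then 1 else 0 := by
  rw [invNum, Finset.card_filter, Fintype.sum_prod_type]

lemma invNum_dsum (α : Perm (Fin m)) (β : Perm (Fin k)) :
    invNum (dsum α β) = invNum α + invNum β := by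
  have h₁ (i : Fin m) (j : Fin k) : (i : ℕ) < m + j := by omega
  have h₂ (i : Fin m) (j : Fin k) : ¬ m + (j : ℕ) < i := by omega
  simp only [invNum_eq_sum, Fin.sum_univ_add, dsum_castAdd_s18, dsum_natAdd_s18, Fin.lt_def,
    Fin.val_castAdd, Fin.val_natAdd, h₁, h₂, Nat.add_lt_add_iff_left, false_and,
    and_false, if_false, Finset.sum_const_zero, add_zero, zero_add]

lemma containsPat_of_segContainsPat_dsum {K : ℕ} (α : Perm (Fin m)) (β : Perm (Fin k))
    (hK : K ≤ k) {p : List ℕ} (h : SegContainsPat (dsum α β) K p) : ContainsPat β p := by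
  rw [containsPat_iff_segContainsPat, segContainsPat_iff]
  obtain ⟨f, hf, hb, hx⟩ := (segContainsPat_iff _ K p).1 h
  have hm (i) : m ≤ f i := by have := hb i; omega
  refine ⟨fun i => f i - m, fun i j hij => ?_, fun i => ?_, fun i j => ?_⟩
  · have := hf hij; have := hm i; dsimp only; omega
  · have := hb i; dsimp only; omega
  · rw [hx, natPerm_dsum, natPerm_dsum, if_neg (by have := hm i; omega),
      if_neg (by have := hm j; omega), Nat.add_lt_add_iff_left]

end DirectSum

section Block
variable {t : ℕ}

/-- `12⋯a ⊕ 321 ⊕ σ` -/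
def dsum321 (a : ℕ) (σ : Perm (Fin t)) : Perm (Fin (a + 3 + t)) :=
  dsum (dsum (1 : Perm (Fin a)) perm321) σ

variable (a : ℕ) (σ : Perm (Fin t))

lemma natPerm_dsum321_of_lt {i : ℕ} (h : i < a) : natPerm (dsum321 a σ) i = i := by
  simp [dsum321, natPerm_dsum, h, show i < a + 3 by omega]

lemma natPerm_dsum321_of_le_of_lt {i : ℕ} (h₁ : a ≤ i) (h₂ : i < a + 3) :
    natPerm (dsum321 a σ) i = 2 * a + 2 - i := by
  simp only [dsum321, natPerm_dsum, h₂, if_true, show ¬ i < a by omega, if_false,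
    natPerm_perm321 (show i - a < 3 by omega)]
  omega

lemma natPerm_dsum321_add (d : ℕ) : natPerm (dsum321 a σ) (a + 3 + d) = a + 3 + natPerm σ d := by
  simp [dsum321, natPerm_dsum]

lemma isDescent_perm321_iff (i : ℕ) : IsDescent perm321 i ↔ i < 2 := by
  unfold IsDescent
  constructor
  · rintro ⟨h, -⟩
    omega
  · intro h
    rw [natPerm_perm321 (show i < 3 by omega), natPerm_perm321 (show i + 1 < 3 by omega)]
    omega

lemma isDescent_dsum321_iff (i : ℕ) : IsDescent (dsum321 a σ) i ↔
    i = a ∨ i = a + 1 ∨ (a + 3 ≤ i ∧ IsDescent σ (i - (a + 3))) := by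
  have : ¬ IsDescent (1 : Perm (Fin a)) i := by simp [IsDescent]
  rw [dsum321, isDescent_dsum_iff, isDescent_dsum_iff, isDescent_perm321_iff]
  by_cases h : a + 3 ≤ i
  · simp only [h, this, true_and, false_or, show ¬ i - a < 2 by omega, and_false,
      show i ≠ a by omega, show i ≠ a + 1 by omega]
  · simp only [h, this, false_and, or_false, false_or]
    omega

lemma hasUnitDescents_dsum321_iff : HasUnitDescents (dsum321 a σ) ↔ HasUnitDescents σ := by
  have h₁ : HasUnitDescents (1 : Perm (Fin a)) := fun i hi => by simp [IsDescent] at hi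
  have h₂ : HasUnitDescents perm321 := fun i hi => by
    have := (isDescent_perm321_iff i).1 hi
    rw [natPerm_perm321 (by omega), natPerm_perm321 (by omega)]
    omega
  simp [dsum321, hasUnitDescents_dsum_iff, h₁, h₂]

lemma invNum_dsum321 : invNum (dsum321 a σ) = invNum σ + 3 := by
  have h₁ : invNum (1 : Perm (Fin a)) = 0 := by
    rw [invNum, Finset.card_eq_zero, Finset.filter_eq_empty_iff]
    exact fun p _ h => lt_asymm h.1 h.2
  have h₂ : invNum perm321 = 3 := by decide
  rw [dsum321, invNum_dsum, invNum_dsum, h₁, h₂]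
  omega

lemma containsPat_321_dsum321 : ContainsPat (dsum321 a σ) [3, 2, 1] := by
  rw [containsPat_three_iff _ (by decide) (by decide) (by decide)]
  refine ⟨a, a + 1, a + 2, by omega, by omega, by omega, ?_⟩
  rw [natPerm_dsum321_of_le_of_lt a σ le_rfl (by omega),
    natPerm_dsum321_of_le_of_lt a σ (i := a + 1) (by omega) (by omega),
    natPerm_dsum321_of_le_of_lt a σ (i := a + 2) (by omega) (by omega)]
  omega

lemma fibStat_dsum321 (hσ : AvoidsAll σ [[2, 3, 1], [3, 1, 2], [3, 2, 1]]) :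
    fibStat (dsum321 a σ) = t := by
  refine IsGreatest.csSup_eq ⟨⟨by omega, fun i hi => ?_, fun p hp hseg => ?_⟩, fun k hk => ?_⟩
  · obtain ⟨d, hd⟩ := Nat.exists_eq_add_of_le (show a + 3 ≤ (i : ℕ) by omega)
    rw [← natPerm_fin, hd, natPerm_dsum321_add]
    omega
  · exact hσ p hp (containsPat_of_segContainsPat_dsum (dsum 1 perm321) σ le_rfl hseg)
  · obtain ⟨hkn, hval, hpat⟩ := hk
    by_contra! hkt
    have hmid := natPerm_dsum321_of_le_of_lt a σ (i := a + 2) (by omega) (by omega)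
    rcases lt_or_ge k (t + 3) with hk3 | hk3
    · have := hval ⟨a + 2, by omega⟩ (show a + 3 + t - k ≤ a + 2 by omega)
      rw [← natPerm_fin] at this
      simp only at this
      omega
    · refine hpat [3, 2, 1] (by simp) ((segContainsPat_three_iff _ k (by decide) (by decide)
        (by decide)).2 ⟨a, a + 1, a + 2, by omega, by omega, by omega, by omega, ?_⟩)
      rw [natPerm_dsum321_of_le_of_lt a σ le_rfl (by omega),
        natPerm_dsum321_of_le_of_lt a σ (i := a + 1) (by omega) (by omega), hmid]
      omega

lemma avoidsAll_dsum321_iff :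
    AvoidsAll (dsum321 a σ) [[2, 3, 1], [3, 1, 2], [4, 3, 2, 1], [2, 1, 5, 4, 3]] ↔
      AvoidsAll σ [[2, 3, 1], [3, 1, 2], [3, 2, 1]] := by
  rw [avoidsAll_4321_21543_iff, avoidsAll_fibonacci_iff, hasUnitDescents_dsum321_iff]
  have hdesc := isDescent_dsum321_iff a σ
  constructor
  · rintro ⟨hσ, -, h21543⟩
    refine ⟨hσ, fun ⟨d, hd, hd₁⟩ => h21543 ?_⟩
    refine containsPat_21543_of_isDescent ((hasUnitDescents_dsum321_iff a σ).2 hσ)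
      (i := a + 1) (j := a + 3 + d) ((hdesc _).2 (by omega)) (fun h => ?_) (by omega)
      ((hdesc _).2 (.inr (.inr ⟨by omega, by simpa using hd⟩))) ((hdesc _).2 (.inr (.inr ?_)))
    · rcases (hdesc _).1 h with h | h | h <;> omega
    · exact ⟨by omega, by simpa [show a + 3 + d + 1 - (a + 3) = d + 1 by omega] using hd₁⟩
  · rintro ⟨hσ, hdd⟩
    have hB := (hasUnitDescents_dsum321_iff a σ).2 hσ
    have hdouble : ∀ i, IsDescent (dsum321 a σ) i → IsDescent (dsum321 a σ) (i + 1) → i = a := by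
      intro i hi hi₁
      rcases (hdesc _).1 hi with h | h | ⟨h, hd⟩ <;> rcases (hdesc _).1 hi₁ with h' | h' | ⟨h', hd'⟩
      all_goals try omega
      exact (hdd ⟨_, hd, by rwa [show i + 1 - (a + 3) = i - (a + 3) + 1 by omega] at hd'⟩).elim
    refine ⟨hσ, fun h => ?_, fun h => ?_⟩
    · obtain ⟨i, hi, hi₁, hi₂⟩ := (containsPat_4321_iff_of_hasUnitDescents hB).1 h
      have := hdouble i hi hi₁
      have := hdouble (i + 1) hi₁ hi₂
      omega
    · obtain ⟨i, j, hij, hi, hj, hj₁⟩ := exists_descent_lt_doubleDescent hB h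
      have := hdouble j hj hj₁
      rcases (hdesc _).1 hi with h | h | ⟨h, -⟩ <;> omega

lemma dsum321_injective :
    Function.Injective (dsum321 a : Perm (Fin t) → Perm (Fin (a + 3 + t))) := fun σ τ h =>
  natPerm_injective (Equiv.ext fun d => by
    simpa [natPerm_dsum321_add] using congrArg (fun π => natPerm π (a + 3 + d)) h)

end Block

section Structure
variable {n : ℕ} {π : Perm (Fin n)}

lemma exists_first_doubleDescent (hπ : HasUnitDescents π) (h : ¬ ContainsPat π [2, 1, 5, 4, 3])
    {b : ℕ} (hb : IsDescent π b ∧ IsDescent π (b + 1)) :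
    ∃ a, IsDescent π a ∧ IsDescent π (a + 1) ∧ ∀ i < a, ¬ IsDescent π i := by
  have hex : ∃ i, IsDescent π i := ⟨b, hb.1⟩
  refine ⟨Nat.find hex, Nat.find_spec hex, ?_, fun i => Nat.find_min hex⟩
  by_contra ha₁
  have := Nat.find_min' hex hb.1
  have : Nat.find hex ≠ b := fun hab => ha₁ (hab ▸ hb.2)
  have : Nat.find hex + 1 ≠ b := fun hab => ha₁ (hab ▸ hb.1)
  exact h (containsPat_21543_of_isDescent hπ (Nat.find_spec hex) ha₁ (by omega) hb.1 hb.2)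

lemma natPerm_eq_self_of_lt {a : ℕ}
    (h : ∀ i < a, ∀ l, i < l → l < n → natPerm π i < natPerm π l) :
    ∀ i < a, natPerm π i = i := by
  intro i
  induction i using Nat.strong_induction_on with
  | _ i ih =>
    intro hi
    rcases lt_or_ge i n with hin | hin
    · obtain ⟨w, hw, hwi⟩ := exists_natPerm_eq π hin
      have hge : i ≤ natPerm π i := by
        by_contra! hlt
        exact hlt.ne ((natPerm π).injective (ih _ hlt (by omega)))
      rcases lt_trichotomy w i with hwi' | rfl | hwi'
      · have := ih w hwi' (by omega); omega
      · exact hwi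
      · have := h i hi w hwi' hw; omega
    · exact natPerm_of_le π hin

lemma le_natPerm_of_forall_exists {m : ℕ} (h : ∀ v < m, ∃ i < m, natPerm π i = v) {l : ℕ}
    (hl : m ≤ l) : m ≤ natPerm π l := by
  by_contra! hlt
  obtain ⟨i, hi, hiv⟩ := h _ hlt
  have := (natPerm π).injective hiv
  omega

lemma natPerm_of_first_doubleDescent (hπ : HasUnitDescents π) {a : ℕ} (ha : IsDescent π a)
    (ha₁ : IsDescent π (a + 1)) (hbefore : ∀ i < a, ¬ IsDescent π i)
    (ha₂ : ¬ IsDescent π (a + 2)) :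
    (∀ i < a, natPerm π i = i) ∧ natPerm π a = a + 2 ∧ natPerm π (a + 1) = a + 1 ∧
      natPerm π (a + 2) = a := by
  have hn : a + 2 < n := ha₁.1
  have hid : ∀ i < a, natPerm π i = i := natPerm_eq_self_of_lt fun i hi l hil hl =>
    natPerm_lt_of_ascent hπ ((isDescent_or_lt π (by omega)).resolve_left (hbefore i hi)) hil hl
  have hge : ∀ l, a ≤ l → a ≤ natPerm π l :=
    fun l => le_natPerm_of_forall_exists fun v hv => ⟨v, hv, hid v hv⟩
  have e₀ := hπ a ha
  have e₁ : natPerm π (a + 1) = natPerm π (a + 2) + 1 := hπ (a + 1) ha₁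
  have hge₂ := hge (a + 2) (by omega)
  obtain ⟨w, hw, hwa⟩ := exists_natPerm_eq π (show a < n by omega)
  have : a + 2 ≤ w := by
    by_contra! hlt
    rcases lt_or_ge w a with h | h
    · have := hid w h; omega
    · obtain rfl | rfl : w = a ∨ w = a + 1 := by omega
      all_goals omega
  rcases this.eq_or_lt with rfl | hlt
  · refine ⟨hid, by omega, by omega, hwa⟩
  · have hasc := (isDescent_or_lt π (show a + 2 + 1 < n by omega)).resolve_left ha₂
    have := natPerm_lt_of_ascent hπ hasc hlt hw
    omega

noncomputable def tailPerm (π : Perm (Fin n)) (m : ℕ) (h : ∀ l, m ≤ l → m ≤ natPerm π l) :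
    Perm (Fin (n - m)) :=
  Equiv.ofBijective (fun k => ⟨natPerm π (m + k) - m, by
      have := k.isLt; have := natPerm_lt π (show m + k < n by omega); omega⟩)
    (Finite.injective_iff_bijective.1 fun k l hkl => by
      have := (natPerm π).injective.eq_iff (a := m + k) (b := m + l)
      have := h (m + k) (by omega)
      have := h (m + l) (by omega)
      simp only [Fin.mk.injEq] at hkl
      exact Fin.ext (by omega))

lemma natPerm_tailPerm (π : Perm (Fin n)) (m : ℕ) (h : ∀ l, m ≤ l → m ≤ natPerm π l) (k : ℕ) :
    natPerm (tailPerm π m h) k = natPerm π (m + k) - m := by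
  rcases lt_or_ge k (n - m) with hk | hk
  · rw [natPerm_of_lt _ hk]; rfl
  · rw [natPerm_of_le _ hk, natPerm_of_le _ (by omega)]
    omega

lemma eq_finCongr_dsum321 {π : Perm (Fin n)} {a : ℕ} (han : a + 3 ≤ n)
    (hid : ∀ i < a, natPerm π i = i) (h₀ : natPerm π a = a + 2)
    (h₁ : natPerm π (a + 1) = a + 1) (h₂ : natPerm π (a + 2) = a)
    (htail : ∀ l, a + 3 ≤ l → a + 3 ≤ natPerm π l) :
    π = (finCongr (by omega)).permCongr (dsum321 a (tailPerm π (a + 3) htail)) := by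
  refine natPerm_injective (Equiv.ext fun i => ?_)
  rw [finCongr_permCongr_invariant @natPerm]
  rcases lt_or_ge i (a + 3) with hi | hi
  · rcases lt_or_ge i a with hia | hia
    · rw [hid i hia, natPerm_dsum321_of_lt _ _ hia]
    · rw [natPerm_dsum321_of_le_of_lt _ _ hia hi]
      obtain rfl | rfl | rfl : i = a ∨ i = a + 1 ∨ i = a + 2 := by omega
      all_goals omega
  · obtain ⟨d, rfl⟩ := Nat.exists_eq_add_of_le hi
    rw [natPerm_dsum321_add, natPerm_tailPerm]
    have := htail (a + 3 + d) (Nat.le_add_right _ _)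
    omega

lemma exists_eq_finCongr_dsum321 {π : Perm (Fin n)}
    (hA : AvoidsAll π [[2, 3, 1], [3, 1, 2], [4, 3, 2, 1], [2, 1, 5, 4, 3]])
    (h321 : ContainsPat π [3, 2, 1]) :
    ∃ a t, ∃ (h : a + 3 + t = n) (σ : Perm (Fin t)),
      AvoidsAll σ [[2, 3, 1], [3, 1, 2], [3, 2, 1]] ∧ π = (finCongr h).permCongr (dsum321 a σ) := by
  obtain ⟨hπ, h4321, h21543⟩ := (avoidsAll_4321_21543_iff π).1 hA
  obtain ⟨a, ha, ha₁, hbefore⟩ :=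
    exists_first_doubleDescent hπ h21543 ((containsPat_321_iff hπ).1 h321).choose_spec
  have ha₂ : ¬ IsDescent π (a + 2) := fun h =>
    h4321 ((containsPat_4321_iff_of_hasUnitDescents hπ).2 ⟨a, ha, ha₁, h⟩)
  obtain ⟨hid, h₀, h₁, h₂⟩ := natPerm_of_first_doubleDescent hπ ha ha₁ hbefore ha₂
  have htail : ∀ l, a + 3 ≤ l → a + 3 ≤ natPerm π l := fun l => by
    refine le_natPerm_of_forall_exists fun v hv => ?_
    rcases lt_or_ge v a with hva | hva
    · exact ⟨v, by omega, hid v hva⟩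
    · obtain h | h | h : v = a ∨ v = a + 1 ∨ v = a + 2 := by omega
      all_goals subst v
      exacts [⟨a + 2, by omega, h₂⟩, ⟨a + 1, by omega, h₁⟩, ⟨a, by omega, h₀⟩]
  have hπ := eq_finCongr_dsum321 ha₁.1 hid h₀ h₁ h₂ htail
  refine ⟨a, _, _, _, ?_, hπ⟩
  rwa [hπ, finCongr_permCongr_invariant (fun π => AvoidsAll π _), avoidsAll_dsum321_iff] at hA

end Structure

lemma fibStat_finCongr_dsum321 {n t a : ℕ} (h : a + 3 + t = n) {σ : Perm (Fin t)}
    (hσ : AvoidsAll σ [[2, 3, 1], [3, 1, 2], [3, 2, 1]]) :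
    fibStat ((finCongr h).permCongr (dsum321 a σ)) = t := by
  rw [finCongr_permCongr_invariant @fibStat, fibStat_dsum321 a σ hσ]

lemma sum_filter_fibStat_eq {n t : ℕ} (ht : t + 3 ≤ n) :
    ∑ π ∈ {π ∈ {π : Perm (Fin n) |
        AvoidsAll π [[2, 3, 1], [3, 1, 2], [4, 3, 2, 1], [2, 1, 5, 4, 3]]} |
          ContainsPat π [3, 2, 1]} with fibStat π = t,
      (X 0 ^ fibStat π * X 1 ^ invNum π : MvPolynomial (Fin 2) ℤ) = X 1 ^ 3 * X 0 ^ t * Fq t := by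
  have h : n - 3 - t + 3 + t = n := by omega
  rw [Fq, Finset.mul_sum]
  symm
  refine Finset.sum_bij (fun σ _ => (finCongr h).permCongr (dsum321 (n - 3 - t) σ))
    (fun σ hσ => ?_) (fun σ _ τ _ hστ => ?_) (fun π hπ => ?_) (fun σ hσ => ?_)
  · simp only [Finset.mem_filter, Finset.mem_univ, true_and] at hσ ⊢
    rw [finCongr_permCongr_invariant (fun π => AvoidsAll π _),
      finCongr_permCongr_invariant (fun π => ContainsPat π _), fibStat_finCongr_dsum321 h hσ]
    exact ⟨⟨(avoidsAll_dsum321_iff _ σ).2 hσ, containsPat_321_dsum321 _ σ⟩, rfl⟩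
  · exact dsum321_injective _ ((finCongr h).permCongr.injective hστ)
  · simp only [Finset.mem_filter, Finset.mem_univ, true_and] at hπ
    obtain ⟨⟨hA, h321⟩, hfib⟩ := hπ
    obtain ⟨a, t', h', σ, hσ, rfl⟩ := exists_eq_finCongr_dsum321 hA h321
    rw [fibStat_finCongr_dsum321 h' hσ] at hfib
    subst hfib
    obtain rfl : a = n - 3 - t' := by omega
    exact ⟨σ, by simpa using hσ, rfl⟩
  · simp only [Finset.mem_filter, Finset.mem_univ, true_and] at hσ
    rw [fibStat_finCongr_dsum321 h hσ, finCongr_permCongr_invariant @invNum, invNum_dsum321]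
    ring

lemma sum_not_containsPat_321 (n : ℕ) :
    ∑ π ∈ {π ∈ {π : Perm (Fin n) |
        AvoidsAll π [[2, 3, 1], [3, 1, 2], [4, 3, 2, 1], [2, 1, 5, 4, 3]]} |
          ¬ ContainsPat π [3, 2, 1]},
      (X 0 ^ fibStat π * X 1 ^ invNum π : MvPolynomial (Fin 2) ℤ) = Fq n * X 0 ^ n := by
  rw [Finset.filter_filter, Fq, Finset.sum_mul]
  simp_rw [← avoidsAll_fibonacci_iff_not_containsPat_321]
  refine Finset.sum_congr rfl fun π hπ => ?_
  rw [fibStat_eq_of_avoidsAll_fibonacci (Finset.mem_filter.1 hπ).2, mul_comm]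

lemma sum_containsPat_321 (n : ℕ) :
    ∑ π ∈ {π ∈ {π : Perm (Fin n) |
        AvoidsAll π [[2, 3, 1], [3, 1, 2], [4, 3, 2, 1], [2, 1, 5, 4, 3]]} |
          ContainsPat π [3, 2, 1]},
      (X 0 ^ fibStat π * X 1 ^ invNum π : MvPolynomial (Fin 2) ℤ) =
      ∑ j ∈ Finset.range (n - 2), X 1 ^ 3 * X 0 ^ j * Fq j := by
  rw [← Finset.sum_fiberwise_of_maps_to (g := fibStat) (t := Finset.range (n - 2))]
  · exact Finset.sum_congr rfl fun t ht => sum_filter_fibStat_eq (by simp at ht; omega)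
  · intro π hπ
    simp only [Finset.mem_filter, Finset.mem_univ, true_and] at hπ
    obtain ⟨a, t, h, σ, hσ, rfl⟩ := exists_eq_finCongr_dsum321 hπ.1 hπ.2
    rw [Finset.mem_range, fibStat_finCongr_dsum321 h hσ]
    omega

theorem stmt18_general (n : ℕ) :
    G n [[2,3,1],[3,1,2],[4,3,2,1],[2,1,5,4,3]] =
      Fq n * X 0 ^ n + ∑ j ∈ Finset.range (n - 2), X 1 ^ 3 * X 0 ^ j * Fq j := by
  rw [G, ← Finset.sum_filter_not_add_sum_filter _ (fun π => ContainsPat π [3, 2, 1]),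
    sum_not_containsPat_321, sum_containsPat_321]

theorem stmt18 (n : ℕ) (hn : 3 ≤ n) :
    G n [[2,3,1],[3,1,2],[4,3,2,1],[2,1,5,4,3]] =
      Fq n * X 0 ^ n + ∑ j ∈ Finset.range (n - 2), X 1 ^ 3 * X 0 ^ j * Fq j :=
  stmt18_general n
end
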